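/- arXiv:2203.01055 — 6 statements merged into one kernel-verified Lean document; each statement's English description precedes it below -/
import Mathlib

section
/- Let (Ω, F, P) be a probability space, d ≥ 1 an integer, and let X = (X^1, …, X^d) and Y = (Y^1, …, Y^d) be ℝ^d-valued random vectors whose laws are absolutely continuous with respect to Lebesgue measure with densities bounded by a constant B > 0. Let K : ℝ → ℝ be bounded and measurable with ∫_ℝ K(u)² du < ∞, let h_1, …, h_d > 0 and x ∈ ℝ^d. Then |Cov(∏_{l=1}^d K_{h_l}(x_l − X^l), ∏_{l=1}^d K_{h_l}(x_l − Y^l))| ≤ B · (∫_ℝ K(u)² du)^d / ∏_{l=1}^d h_l. -/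
open MeasureTheory Finset

/-- Covariance of two real random variables: `Cov(X, Y) = E[XY] − E[X]E[Y]`. -/
noncomputable def cov {Ω : Type*} [MeasureSpace Ω] (X Y : Ω → ℝ) : ℝ :=
  (∫ ω, X ω * Y ω) - (∫ ω, X ω) * (∫ ω, Y ω)

/-- Rescaled kernel: `K_h(u) = (1/h) K(u/h)`. -/
noncomputable def kh (K : ℝ → ℝ) (h : ℝ) (u : ℝ) : ℝ := (1 / h) * K (u / h)

/-!
Since `Var (U ± V) ≥ 0`, `|Cov(U, V)| ≤ (Var U + Var V) / 2 ≤ (E U² + E V²) / 2`, so it suffices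
to bound the second moment of each product kernel by `B (∫ K²)^d / ∏ h_l`. A density bounded by
`B` means the law of `X` is dominated by `B` times Lebesgue measure, so
`E[∏ K_{h_l}(x_l − X^l)²] ≤ B ∫ ∏ K_{h_l}(x_l − z_l)² dz`; by Fubini and the substitution
`u = (x_l − z_l) / h_l` the last integral is `∏ (∫ K²) / h_l`.
-/

open ProbabilityTheory

section Covariance

variable {Ω : Type*} {mΩ : MeasurableSpace Ω} {μ : Measure Ω} {U V : Ω → ℝ}

lemma abs_covariance_le_half_add_variance [IsFiniteMeasure μ] (hU : MemLp U 2 μ)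
    (hV : MemLp V 2 μ) : |cov[U, V; μ]| ≤ (Var[U; μ] + Var[V; μ]) / 2 := by
  have h_add := variance_nonneg (U + V) μ
  have h_sub := variance_nonneg (U - V) μ
  rw [variance_add hU hV] at h_add
  rw [variance_sub hU hV] at h_sub
  rw [abs_le]
  constructor <;> linarith

lemma abs_covariance_le_of_integral_sq_le [IsProbabilityMeasure μ] (hU : MemLp U 2 μ)
    (hV : MemLp V 2 μ) {C : ℝ} (hUC : μ[U ^ 2] ≤ C) (hVC : μ[V ^ 2] ≤ C) :
    |cov[U, V; μ]| ≤ C := by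
  linarith [abs_covariance_le_half_add_variance hU hV,
    variance_le_expectation_sq hU.aestronglyMeasurable,
    variance_le_expectation_sq hV.aestronglyMeasurable]

end Covariance

lemma cov_eq_covariance {Ω : Type*} [MeasureSpace Ω] [IsProbabilityMeasure (volume : Measure Ω)]
    {U V : Ω → ℝ} (hU : MemLp U 2) (hV : MemLp V 2) : cov U V = cov[U, V] :=
  (covariance_eq_sub hU hV).symm

section Domination

variable {Ω E : Type*} {mΩ : MeasurableSpace Ω} {mE : MeasurableSpace E} {P : Measure Ω}
  {μ : Measure E} {X : Ω → E} {F : E → ℝ}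

lemma withDensity_ofReal_le_smul (μ : Measure E) {p : E → ℝ} {B : ℝ} (hpB : ∀ z, p z ≤ B) :
    μ.withDensity (fun z => ENNReal.ofReal (p z)) ≤ ENNReal.ofReal B • μ := by
  rw [← withDensity_const]
  exact withDensity_mono (Filter.Eventually.of_forall fun z => ENNReal.ofReal_le_ofReal (hpB z))

lemma integrable_comp_of_map_le_smul (hX : AEMeasurable X P) {c : ENNReal} (hc : c ≠ ⊤)
    (hPX : P.map X ≤ c • μ) (hF : Integrable F μ) : Integrable (F ∘ X) P := by
  have hFX : Integrable F (P.map X) := (hF.smul_measure hc).mono_measure hPX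
  exact (integrable_map_measure hFX.aestronglyMeasurable hX).1 hFX

lemma memLp_two_comp_of_map_le_smul (hX : AEMeasurable X P) {c : ENNReal} (hc : c ≠ ⊤)
    (hPX : P.map X ≤ c • μ) (hFX : AEStronglyMeasurable (F ∘ X) P)
    (hF2 : Integrable (fun z => F z ^ 2) μ) : MemLp (F ∘ X) 2 P :=
  (memLp_two_iff_integrable_sq hFX).2 (integrable_comp_of_map_le_smul hX hc hPX hF2)

lemma integral_comp_le_of_map_le_smul (hX : AEMeasurable X P) {B : ℝ} (hB : 0 ≤ B)
    (hPX : P.map X ≤ ENNReal.ofReal B • μ) (hF0 : 0 ≤ F) (hF : Integrable F μ) :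
    ∫ ω, F (X ω) ∂P ≤ B * ∫ z, F z ∂μ := by
  have hFB : Integrable F (ENNReal.ofReal B • μ) := hF.smul_measure ENNReal.ofReal_ne_top
  calc ∫ ω, F (X ω) ∂P = ∫ z, F z ∂(P.map X) :=
        (integral_map hX (hFB.mono_measure hPX).aestronglyMeasurable).symm
    _ ≤ ∫ z, F z ∂(ENNReal.ofReal B • μ) :=
        integral_mono_measure hPX (Filter.Eventually.of_forall hF0) hFB
    _ = B * ∫ z, F z ∂μ := by
        rw [integral_smul_measure, ENNReal.toReal_ofReal hB, smul_eq_mul]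

end Domination

section Kernel

variable {K : ℝ → ℝ} {ι : Type*} [Fintype ι]

lemma integrable_kh_sub_sq (hK2 : Integrable (fun u => K u ^ 2)) {h : ℝ} (hh : h ≠ 0)
    (a : ℝ) : Integrable (fun u => kh K h (a - u) ^ 2) := by
  simp only [kh, mul_pow]
  exact ((hK2.comp_div hh).comp_sub_left a).const_mul _

lemma integral_kh_sub_sq (K : ℝ → ℝ) {h : ℝ} (hh : 0 < h) (a : ℝ) :
    ∫ u, kh K h (a - u) ^ 2 = (∫ u, K u ^ 2) / h := by
  simp only [kh, mul_pow, integral_const_mul]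
  rw [integral_sub_left_eq_self (fun u => K (u / h) ^ 2),
    Measure.integral_comp_div (fun u => K u ^ 2), abs_of_pos hh, smul_eq_mul]
  field_simp

lemma measurable_prod_kh_sub (hKm : Measurable K) (h x : ι → ℝ) :
    Measurable (fun z : ι → ℝ => ∏ l, kh K (h l) (x l - z l)) := by
  unfold kh
  fun_prop

lemma integrable_prod_kh_sub_sq (hK2 : Integrable (fun u => K u ^ 2)) {h : ι → ℝ}
    (hh : ∀ l, h l ≠ 0) (x : ι → ℝ) :
    Integrable (fun z : ι → ℝ => (∏ l, kh K (h l) (x l - z l)) ^ 2) := by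
  simp_rw [← prod_pow]
  exact Integrable.fintype_prod (f := fun l u => kh K (h l) (x l - u) ^ 2)
    fun l => integrable_kh_sub_sq hK2 (hh l) (x l)

lemma integral_prod_kh_sub_sq (K : ℝ → ℝ) {h : ι → ℝ} (hh : ∀ l, 0 < h l) (x : ι → ℝ) :
    ∫ z : ι → ℝ, (∏ l, kh K (h l) (x l - z l)) ^ 2
      = (∫ u, K u ^ 2) ^ Fintype.card ι / ∏ l, h l := by
  simp_rw [← prod_pow]
  rw [integral_fintype_prod_volume_eq_prod (fun l u => kh K (h l) (x l - u) ^ 2)]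
  simp_rw [integral_kh_sub_sq K (hh _)]
  rw [prod_div_distrib, prod_const, card_univ]

end Kernel

theorem abs_cov_kernel_le_general {Ω : Type*} [MeasureSpace Ω]
    [IsProbabilityMeasure (volume : Measure Ω)]
    (d : ℕ) (X Y : Ω → (Fin d → ℝ))
    (hX : Measurable X) (hY : Measurable Y)
    (B : ℝ) (hB : 0 < B)
    (pX pY : (Fin d → ℝ) → ℝ)
    (hpXB : ∀ z, pX z ≤ B) (hpYB : ∀ z, pY z ≤ B)
    (hlawX : Measure.map X volume = volume.withDensity (fun z => ENNReal.ofReal (pX z)))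
    (hlawY : Measure.map Y volume = volume.withDensity (fun z => ENNReal.ofReal (pY z)))
    (K : ℝ → ℝ) (hKm : Measurable K)
    (hK2 : Integrable (fun u => K u ^ 2))
    (h : Fin d → ℝ) (hh : ∀ l, 0 < h l) (x : Fin d → ℝ) :
    |cov (fun ω => ∏ l, kh K (h l) (x l - X ω l))
        (fun ω => ∏ l, kh K (h l) (x l - Y ω l))|
      ≤ B * (∫ u, K u ^ 2) ^ d / ∏ l, h l := by
  let G : (Fin d → ℝ) → ℝ := fun z => ∏ l, kh K (h l) (x l - z l)
  have hG : Measurable G := measurable_prod_kh_sub hKm h x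
  have hG2 : Integrable (fun z => G z ^ 2) :=
    integrable_prod_kh_sub_sq hK2 (fun l => (hh l).ne') x
  have hG2_eq : ∫ z, G z ^ 2 = (∫ u, K u ^ 2) ^ d / ∏ l, h l := by
    rw [integral_prod_kh_sub_sq K hh x, Fintype.card_fin]
  have hdomX := hlawX ▸ withDensity_ofReal_le_smul volume hpXB
  have hdomY := hlawY ▸ withDensity_ofReal_le_smul volume hpYB
  have hU : MemLp (G ∘ X) 2 := memLp_two_comp_of_map_le_smul hX.aemeasurable
    ENNReal.ofReal_ne_top hdomX (hG.comp hX).aestronglyMeasurable hG2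
  have hV : MemLp (G ∘ Y) 2 := memLp_two_comp_of_map_le_smul hY.aemeasurable
    ENNReal.ofReal_ne_top hdomY (hG.comp hY).aestronglyMeasurable hG2
  change |cov (G ∘ X) (G ∘ Y)| ≤ _
  rw [cov_eq_covariance hU hV, mul_div_assoc, ← hG2_eq]
  exact abs_covariance_le_of_integral_sq_le hU hV
    (integral_comp_le_of_map_le_smul (F := fun z => G z ^ 2) hX.aemeasurable hB.le hdomX
      (fun _ => sq_nonneg _) hG2)
    (integral_comp_le_of_map_le_smul (F := fun z => G z ^ 2) hY.aemeasurable hB.le hdomY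
      (fun _ => sq_nonneg _) hG2)

/-- If the laws of the random vectors `X, Y : Ω → ℝ^d` have densities (w.r.t. Lebesgue
measure) bounded by `B`, `K` is bounded measurable and square integrable, then
`|Cov(∏ K_{h_l}(x_l − X^l), ∏ K_{h_l}(x_l − Y^l))| ≤ B (∫ K²)^d / ∏ h_l`. -/
theorem abs_cov_kernel_le {Ω : Type*} [MeasureSpace Ω]
    [IsProbabilityMeasure (volume : Measure Ω)]
    (d : ℕ) (hd : 1 ≤ d) (X Y : Ω → (Fin d → ℝ))
    (hX : Measurable X) (hY : Measurable Y)
    (B : ℝ) (hB : 0 < B)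
    (pX pY : (Fin d → ℝ) → ℝ) (hpXm : Measurable pX) (hpYm : Measurable pY)
    (hpX0 : ∀ z, 0 ≤ pX z) (hpY0 : ∀ z, 0 ≤ pY z)
    (hpXB : ∀ z, pX z ≤ B) (hpYB : ∀ z, pY z ≤ B)
    (hlawX : Measure.map X volume = volume.withDensity (fun z => ENNReal.ofReal (pX z)))
    (hlawY : Measure.map Y volume = volume.withDensity (fun z => ENNReal.ofReal (pY z)))
    (K : ℝ → ℝ) (hKm : Measurable K) (hKb : ∃ M, ∀ u, |K u| ≤ M)
    (hK2 : Integrable (fun u => K u ^ 2))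
    (h : Fin d → ℝ) (hh : ∀ l, 0 < h l) (x : Fin d → ℝ) :
    |cov (fun ω => ∏ l, kh K (h l) (x l - X ω l))
        (fun ω => ∏ l, kh K (h l) (x l - Y ω l))|
      ≤ B * (∫ u, K u ^ 2) ^ d / ∏ l, h l :=
  abs_cov_kernel_le_general d X Y hX hY B hB pX pY hpXB hpYB hlawX hlawY K hKm hK2 h hh x
end

section
/- Let d ≥ 3 and n ≥ 1 be integers, let k_0 be an integer with 3 ≤ k_0 ≤ d, Δ > 0, T = nΔ, h_1, …, h_d ∈ (0, 1), and A > 0, ρ > 0. Write H = ∏_{l=1}^d h_l. Let k : {0, …, n−1} → ℝ satisfy: (i) |k(j)| ≤ A/H for all j; (ii) |k(j)| ≤ (A/∏_{l=k_0+1}^d h_l)·(jΔ)^{−k_0/2} for all j ≥ 1; (iii) |k(j)| ≤ A((jΔ)^{−d/2} + 1) for all j ≥ 1; (iv) |k(j)| ≤ (A/H²)·e^{−ρ j Δ} for all j. Then there exist constants C > 0 and T_0 > 0, depending only on A, ρ and d, such that for all T ≥ T_0: (Δ²/T²)·∑_{j=0}^{n−1} (n − j)|k(j)| ≤ (C/T)·(1/((∏_{l=1}^{k_0}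 h_l)^{1 − 2/k_0}·∏_{l=k_0+1}^d h_l) + Δ/H). -/
open Finset

lemma telescope_step (N : ℕ) (hN : 1 ≤ N) :
    (((N:ℝ)+1) * Real.sqrt ((N:ℝ)+1))⁻¹ ≤ 2 / Real.sqrt N - 2 / Real.sqrt ((N:ℝ)+1) := by
  set a := Real.sqrt N with ha
  set b := Real.sqrt ((N:ℝ)+1) with hb
  have hNpos : (1:ℝ) ≤ (N:ℝ) := by exact_mod_cast hN
  have ha2 : a^2 = N := Real.sq_sqrt (by linarith)
  have hb2 : b^2 = (N:ℝ)+1 := Real.sq_sqrt (by linarith)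
  have hapos : 0 < a := Real.sqrt_pos.2 (by linarith)
  have hbpos : 0 < b := Real.sqrt_pos.2 (by linarith)
  have hab : a ≤ b := Real.sqrt_le_sqrt (by linarith)
  have hab2 : a * b ≤ (N:ℝ) + 1/2 := by
    rw [ha, hb, ← Real.sqrt_mul (by positivity)]
    calc Real.sqrt ((N:ℝ) * ((N:ℝ)+1)) ≤ Real.sqrt (((N:ℝ)+1/2)^2) :=
          Real.sqrt_le_sqrt (by nlinarith)
      _ = (N:ℝ)+1/2 := Real.sqrt_sq (by positivity)
  rw [div_sub_div _ _ hapos.ne' hbpos.ne', inv_eq_one_div, ← hb2,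
    div_le_div_iff₀ (by positivity) (by positivity)]
  nlinarith [mul_pos hapos hbpos, sq_nonneg b, sq_nonneg (a*b)]

lemma tail_sum_aux (m : ℕ) (hm : 1 ≤ m) :
    ∀ N, m ≤ N → ∑ j ∈ Finset.Ioc m N, ((j:ℝ) * Real.sqrt j)⁻¹
      ≤ 2 / Real.sqrt m - 2 / Real.sqrt N := by
  intro N hN
  induction N, hN using Nat.le_induction with
  | base => simp
  | succ N hmN ih =>
    rw [Finset.sum_Ioc_succ_top hmN]
    have h1 := telescope_step N (le_trans hm hmN)
    have h2 := ih
    push_cast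
    push_cast at h2
    linarith

lemma tail_sum (m N : ℕ) : ∑ j ∈ Finset.Ioc m N, ((j:ℝ) * Real.sqrt j)⁻¹
    ≤ 3 / Real.sqrt ((m:ℝ)+1) := by
  rcases le_or_gt N m with hNm | hmN
  · rw [Finset.Ioc_eq_empty (by omega)]
    positivity
  · rw [← Finset.sum_Ioc_consecutive _ (Nat.le_succ m) hmN]
    have h1 : Finset.Ioc m (m+1) = {m+1} := by
      ext x; simp [Nat.lt_succ_iff]
    have hs : (1:ℝ) ≤ Real.sqrt ((m:ℝ)+1) := by
      have := Real.sqrt_le_sqrt (show (1:ℝ) ≤ (m:ℝ)+1 by push_cast; linarith)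
      simpa using this
    have hspos : 0 < Real.sqrt ((m:ℝ)+1) := by linarith
    have h2 : ∑ j ∈ Finset.Ioc m (m+1), ((j:ℝ) * Real.sqrt j)⁻¹ ≤ 1 / Real.sqrt ((m:ℝ)+1) := by
      rw [h1, Finset.sum_singleton]
      push_cast
      rw [one_div]
      apply inv_anti₀ hspos
      nlinarith
    have h3 := tail_sum_aux (m+1) (by omega) N (by omega)
    have h4 : (0:ℝ) ≤ 2 / Real.sqrt N := by positivity
    push_cast at h3
    simp only [Nat.succ_eq_add_one]
    have h5 : 1/Real.sqrt ((m:ℝ)+1) + 2/Real.sqrt ((m:ℝ)+1) = 3/Real.sqrt ((m:ℝ)+1) := by ring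
    linarith

/-- Deterministic summation core of the variance bound (`d ≥ 3`, case `k₀ ≥ 3`): if
`k(j)` satisfies the four covariance bounds (i)–(iv), then
`(Δ²/T²)·∑_{j<n} (n − j)|k(j)| ≤ (C/T)·(1/((∏_{l≤k₀} h_l)^{1−2/k₀} ∏_{l>k₀} h_l) + Δ/H)`
with `T = nΔ`, for constants `C, T₀` depending only on `A, ρ, d`. -/
theorem discrete_variance_sum_bound_k0_large (d : ℕ) (hd : 3 ≤ d)
    (A ρ : ℝ) (hA : 0 < A) (hρ : 0 < ρ) :
    ∃ C > (0:ℝ), ∃ T0 > (0:ℝ),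
      ∀ (k₀ : ℕ), 3 ≤ k₀ → k₀ ≤ d →
      ∀ (n : ℕ), 1 ≤ n → ∀ (Δ : ℝ), 0 < Δ →
      ∀ (h : Fin d → ℝ), (∀ l, h l ∈ Set.Ioo (0:ℝ) 1) →
      ∀ (k : ℕ → ℝ),
        (∀ j, j < n → |k j| ≤ A / ∏ l, h l) →
        (∀ j, 1 ≤ j → j < n →
          |k j| ≤ (A / ∏ l ∈ Finset.univ.filter (fun l : Fin d => k₀ ≤ l.val), h l)
                    * ((j : ℝ) * Δ) ^ (-(k₀:ℝ)/2)) →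
        (∀ j, 1 ≤ j → j < n → |k j| ≤ A * (((j : ℝ) * Δ) ^ (-(d:ℝ)/2) + 1)) →
        (∀ j, j < n → |k j| ≤ (A / (∏ l, h l) ^ 2) * Real.exp (-ρ * (j : ℝ) * Δ)) →
        T0 ≤ (n : ℝ) * Δ →
        Δ ^ 2 / ((n : ℝ) * Δ) ^ 2 * ∑ j ∈ Finset.range n, ((n : ℝ) - (j : ℝ)) * |k j|
          ≤ C / ((n : ℝ) * Δ)
              * (1 / ((∏ l ∈ Finset.univ.filter (fun l : Fin d => l.val < k₀), h l)
                        ^ (1 - (2:ℝ)/(k₀:ℝ))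
                      * ∏ l ∈ Finset.univ.filter (fun l : Fin d => k₀ ≤ l.val), h l)
                  + Δ / ∏ l, h l) := by
  refine ⟨4*A, by positivity, 1, one_pos, ?_⟩
  intro k₀ hk3 hkd n hn Δ hΔ h hh k hk1 hk2 _ _ _
  set P1 := ∏ l ∈ Finset.univ.filter (fun l : Fin d => l.val < k₀), h l with hP1def
  set P2 := ∏ l ∈ Finset.univ.filter (fun l : Fin d => k₀ ≤ l.val), h l with hP2def
  set H := ∏ l, h l with hHdef
  have hP1pos : 0 < P1 := Finset.prod_pos (fun l _ => (hh l).1)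
  have hP2pos : 0 < P2 := Finset.prod_pos (fun l _ => (hh l).1)
  have hHsplit : H = P1 * P2 := by
    rw [hP1def, hP2def, hHdef,
      ← Finset.prod_filter_mul_prod_filter_not Finset.univ (fun l : Fin d => l.val < k₀) h]
    congr 1
    exact Finset.prod_congr (Finset.filter_congr (fun x _ => by exact not_lt)) (fun _ _ => rfl)
  have hHpos : 0 < H := by rw [hHsplit]; positivity
  have hk₀pos : (0:ℝ) < (k₀:ℝ) := by positivity
  have hk₀3 : (3:ℝ) ≤ (k₀:ℝ) := by exact_mod_cast hk3
  set t := P1 ^ ((2:ℝ)/(k₀:ℝ)) with htdef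
  have htpos : 0 < t := Real.rpow_pos_of_pos hP1pos _
  set J := Nat.floor (t/Δ) with hJdef
  have hJ1 : (J:ℝ) * Δ ≤ t := by
    have h1 := Nat.floor_le (le_of_lt (div_pos htpos hΔ))
    calc (J:ℝ)*Δ ≤ (t/Δ)*Δ := mul_le_mul_of_nonneg_right h1 hΔ.le
      _ = t := div_mul_cancel₀ _ hΔ.ne'
  have hJt : t/Δ ≤ (J:ℝ)+1 := (Nat.lt_floor_add_one (t/Δ)).le
  have hJ2 : t ≤ ((J:ℝ)+1) * Δ := by
    calc t = (t/Δ)*Δ := (div_mul_cancel₀ _ hΔ.ne').symm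
      _ ≤ ((J:ℝ)+1)*Δ := mul_le_mul_of_nonneg_right hJt hΔ.le
  set Q := (P1 ^ (1 - (2:ℝ)/(k₀:ℝ)))⁻¹ with hQdef
  have hQpos : 0 < Q := by
    rw [hQdef]; positivity
  have hQ1 : t / P1 = Q := by
    rw [hQdef, ← Real.rpow_neg hP1pos.le, htdef,
      show -(1 - (2:ℝ)/(k₀:ℝ)) = (2:ℝ)/(k₀:ℝ) - 1 by ring, Real.rpow_sub hP1pos, Real.rpow_one]
  have hQ2 : t ^ (1 - (k₀:ℝ)/2) = Q := by
    rw [htdef, ← Real.rpow_mul hP1pos.le, hQdef, ← Real.rpow_neg hP1pos.le]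
    congr 1
    field_simp
    ring
  -- first bucket
  have hA1 : ∑ j ∈ (Finset.range n).filter (fun j => j < J+1), Δ*|k j|
      ≤ A*(Q/P2) + A*(Δ/H) := by
    have hc : (((Finset.range n).filter (fun j => j < J+1)).card : ℝ) ≤ (J:ℝ)+1 := by
      have : ((Finset.range n).filter (fun j => j < J+1)).card ≤ J+1 := by
        calc ((Finset.range n).filter (fun j => j < J+1)).card
            ≤ (Finset.range (J+1)).card := Finset.card_le_card (fun x hx => by
              simp only [Finset.mem_filter, Finset.mem_range] at hx ⊢; exact hx.2)
          _ = J+1 := Finset.card_range _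
      exact_mod_cast this
    calc ∑ j ∈ (Finset.range n).filter (fun j => j < J+1), Δ*|k j|
        ≤ ∑ j ∈ (Finset.range n).filter (fun j => j < J+1), Δ*(A/H) :=
          Finset.sum_le_sum (fun j hj => mul_le_mul_of_nonneg_left
            (hk1 j (Finset.mem_range.1 (Finset.mem_filter.1 hj).1)) hΔ.le)
      _ = (((Finset.range n).filter (fun j => j < J+1)).card : ℝ) * (Δ*(A/H)) := by
          rw [Finset.sum_const, nsmul_eq_mul]
      _ ≤ ((J:ℝ)+1) * (Δ*(A/H)) := mul_le_mul_of_nonneg_right hc (by positivity)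
      _ = ((J:ℝ)*Δ + Δ)*(A/H) := by ring
      _ ≤ (t + Δ)*(A/H) := mul_le_mul_of_nonneg_right (by linarith) (by positivity)
      _ = A*(t/H) + A*(Δ/H) := by ring
      _ = A*(Q/P2) + A*(Δ/H) := by rw [hHsplit, ← div_div, hQ1]
  -- second bucket
  set c := Δ * (A/P2) * t ^ ((3 - (k₀:ℝ))/2) * Δ ^ (-(3:ℝ)/2) with hcdef
  have hcpos : 0 ≤ c := by rw [hcdef]; positivity
  have hB1 : ∀ j ∈ (Finset.range n).filter (fun j => ¬ j < J+1),
      Δ*|k j| ≤ c * ((j:ℝ)*Real.sqrt j)⁻¹ := by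
    intro j hj
    obtain ⟨hjn', hjJ⟩ := Finset.mem_filter.1 hj
    have hjn : j < n := Finset.mem_range.1 hjn'
    have hj1 : 1 ≤ j := by omega
    have hjpos : (0:ℝ) < (j:ℝ) := by exact_mod_cast Nat.lt_of_lt_of_le Nat.zero_lt_one hj1
    have hjΔpos : 0 < (j:ℝ)*Δ := by positivity
    have htle : t ≤ (j:ℝ)*Δ := by
      calc t ≤ ((J:ℝ)+1)*Δ := hJ2
        _ ≤ (j:ℝ)*Δ := by
            apply mul_le_mul_of_nonneg_right _ hΔ.le
            have : J+1 ≤ j := not_lt.1 hjJ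
            push_cast
            exact_mod_cast this
    have e1 : ((j:ℝ)*Δ) ^ (-(k₀:ℝ)/2)
        = ((j:ℝ)*Δ)^((3-(k₀:ℝ))/2) * ((j:ℝ)*Δ)^(-(3:ℝ)/2) := by
      rw [← Real.rpow_add hjΔpos]; congr 1; ring
    have e2 : ((j:ℝ)*Δ)^((3-(k₀:ℝ))/2) ≤ t^((3-(k₀:ℝ))/2) :=
      Real.rpow_le_rpow_of_nonpos htpos htle (by linarith)
    have e3 : ((j:ℝ)*Δ)^(-(3:ℝ)/2) = ((j:ℝ)*Real.sqrt j)⁻¹ * Δ^(-(3:ℝ)/2) := by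
      rw [Real.mul_rpow hjpos.le hΔ.le]
      congr 1
      rw [show (-(3:ℝ)/2) = -((3:ℝ)/2) by ring, Real.rpow_neg hjpos.le]
      congr 1
      rw [show ((3:ℝ)/2) = 1 + 1/2 by norm_num, Real.rpow_add hjpos, Real.rpow_one,
        Real.sqrt_eq_rpow]
    calc Δ * |k j| ≤ Δ * ((A/P2) * ((j:ℝ)*Δ)^(-(k₀:ℝ)/2)) :=
          mul_le_mul_of_nonneg_left (hk2 j hj1 hjn) hΔ.le
      _ = Δ * (A/P2) * (((j:ℝ)*Δ)^((3-(k₀:ℝ))/2) * ((j:ℝ)*Δ)^(-(3:ℝ)/2)) := by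
          rw [← e1]; ring
      _ ≤ Δ * (A/P2) * (t^((3-(k₀:ℝ))/2) * ((j:ℝ)*Δ)^(-(3:ℝ)/2)) := by
          apply mul_le_mul_of_nonneg_left _ (by positivity)
          exact mul_le_mul_of_nonneg_right e2 (by positivity)
      _ = c * ((j:ℝ)*Real.sqrt j)⁻¹ := by rw [e3, hcdef]; ring
  have hsub : (Finset.range n).filter (fun j => ¬ j < J+1) ⊆ Finset.Ioc J (n-1) := by
    intro x hx
    simp only [Finset.mem_filter, Finset.mem_range, not_lt] at hx
    simp only [Finset.mem_Ioc]
    omega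
  have hB2 : ∑ j ∈ (Finset.range n).filter (fun j => ¬ j < J+1), Δ*|k j|
      ≤ c * (3 / Real.sqrt ((J:ℝ)+1)) := by
    calc ∑ j ∈ (Finset.range n).filter (fun j => ¬ j < J+1), Δ*|k j|
        ≤ ∑ j ∈ (Finset.range n).filter (fun j => ¬ j < J+1), c * ((j:ℝ)*Real.sqrt j)⁻¹ :=
          Finset.sum_le_sum hB1
      _ ≤ ∑ j ∈ Finset.Ioc J (n-1), c * ((j:ℝ)*Real.sqrt j)⁻¹ :=
          Finset.sum_le_sum_of_subset_of_nonneg hsub (fun i _ _ => by positivity)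
      _ = c * ∑ j ∈ Finset.Ioc J (n-1), ((j:ℝ)*Real.sqrt j)⁻¹ := by rw [Finset.mul_sum]
      _ ≤ c * (3 / Real.sqrt ((J:ℝ)+1)) :=
          mul_le_mul_of_nonneg_left (tail_sum J (n-1)) hcpos
  have h7 : 3 / Real.sqrt ((J:ℝ)+1) ≤ 3 * (Δ^((1:ℝ)/2) * t^(-(1:ℝ)/2)) := by
    have hsp : 0 < Real.sqrt (t/Δ) := Real.sqrt_pos.2 (by positivity)
    have h8 : 3 / Real.sqrt ((J:ℝ)+1) ≤ 3 / Real.sqrt (t/Δ) := by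
      gcongr
    refine h8.trans (le_of_eq ?_)
    rw [Real.sqrt_eq_rpow, Real.div_rpow htpos.le hΔ.le,
      show -(1:ℝ)/2 = -((1:ℝ)/2) by ring, Real.rpow_neg htpos.le,
      div_div_eq_mul_div, div_eq_mul_inv]
    ring
  have eΔ : Δ^(1:ℝ) * Δ^(-(3:ℝ)/2) * Δ^((1:ℝ)/2) = 1 := by
    rw [← Real.rpow_add hΔ, ← Real.rpow_add hΔ]
    norm_num
  have et : t^((3-(k₀:ℝ))/2) * t^(-(1:ℝ)/2) = Q := by
    rw [← Real.rpow_add htpos, show (3-(k₀:ℝ))/2 + -(1:ℝ)/2 = 1 - (k₀:ℝ)/2 by ring, hQ2]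
  have hB3 : c * (3 / Real.sqrt ((J:ℝ)+1)) ≤ 3 * A * (Q/P2) := by
    calc c * (3 / Real.sqrt ((J:ℝ)+1)) ≤ c * (3 * (Δ^((1:ℝ)/2) * t^(-(1:ℝ)/2))) :=
          mul_le_mul_of_nonneg_left h7 hcpos
      _ = 3*(A/P2) * ((t^((3-(k₀:ℝ))/2) * t^(-(1:ℝ)/2)) * (Δ^(1:ℝ) * Δ^(-(3:ℝ)/2) * Δ^((1:ℝ)/2))) := by
          rw [hcdef, Real.rpow_one]; ring
      _ = 3 * A * (Q/P2) := by rw [et, eΔ, mul_one]; ring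
  -- combine
  have KB : Δ * ∑ j ∈ Finset.range n, |k j| ≤ 4*A*(Q/P2 + Δ/H) := by
    rw [Finset.mul_sum,
      ← Finset.sum_filter_add_sum_filter_not (Finset.range n) (fun j => j < J+1)
        (fun j => Δ * |k j|)]
    have hp1 : (0:ℝ) ≤ A*(Δ/H) := by positivity
    have := hB2.trans hB3
    linarith
  -- final assembly
  have hnpos : (0:ℝ) < (n:ℝ) := by exact_mod_cast hn
  have hT : (0:ℝ) < (n:ℝ)*Δ := by positivity
  have hQ3 : Q / P2 = 1/(P1 ^ (1 - (2:ℝ)/(k₀:ℝ)) * P2) := by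
    rw [hQdef, div_eq_mul_inv, ← mul_inv, one_div]
  have hstep1 : ∑ j ∈ Finset.range n, ((n:ℝ) - (j:ℝ)) * |k j|
      ≤ (n:ℝ) * ∑ j ∈ Finset.range n, |k j| := by
    rw [Finset.mul_sum]
    apply Finset.sum_le_sum
    intro j hj
    have hj0 : (0:ℝ) ≤ (j:ℝ) := Nat.cast_nonneg j
    exact mul_le_mul_of_nonneg_right (by linarith) (abs_nonneg _)
  calc Δ ^ 2 / ((n:ℝ)*Δ)^2 * ∑ j ∈ Finset.range n, ((n:ℝ) - (j:ℝ)) * |k j|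
      ≤ Δ ^ 2 / ((n:ℝ)*Δ)^2 * ((n:ℝ) * ∑ j ∈ Finset.range n, |k j|) :=
        mul_le_mul_of_nonneg_left hstep1 (by positivity)
    _ = (1/((n:ℝ)*Δ)) * (Δ * ∑ j ∈ Finset.range n, |k j|) := by
        field_simp
    _ ≤ (1/((n:ℝ)*Δ)) * (4*A*(Q/P2 + Δ/H)) :=
        mul_le_mul_of_nonneg_left KB (by positivity)
    _ = 4*A / ((n:ℝ)*Δ) * (1/(P1 ^ (1 - (2:ℝ)/(k₀:ℝ)) * P2) + Δ/H) := by
        rw [← hQ3]; ring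
end

section
/- Let d ≥ 3 and n ≥ 1 be integers, Δ > 0, T = nΔ, h_1, …, h_d ∈ (0, 1), and A > 0, ρ > 0. Write H = ∏_{l=1}^d h_l. Let k : {0, …, n−1} → ℝ satisfy: (i) |k(j)| ≤ A/H for all j; (ii) |k(j)| ≤ (A/∏_{l=2}^d h_l)·(jΔ)^{−1/2} for all j ≥ 1; (iii) |k(j)| ≤ A((jΔ)^{−3/2}/∏_{l=4}^d h_l + 1) for all j ≥ 1; (iv) |k(j)| ≤ (A/H²)·e^{−ρ j Δ} for all j. Then there exist constants C > 0 and T_0 > 0, depending only on A, ρ and d, such that for all T ≥ T_0: (Δ²/T²)·∑_{j=0}^{n−1} (n − j)|k(j)| ≤ (C/T)·(1/(√(h_2 h_3)·∏_{l=4}^d h_l) + 1 + ∑_{l=1}^d |log h_l| + Δ/H). -/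
/-!
Bounding the weights `n - j` by `n`, it suffices to bound `Δ ∑_{j<n} |k j|`. Write `t = jΔ`,
`σ = √(h 1 · h 2)` and `P = ∏_{l ≥ 3} h l` (indices from `0`, as in the statement), so that the
product in (ii) is `σ² P`. The term `j = 0` is bounded by (i). For `j ≥ 1`, (ii) is used for
`t ≤ σ²` and the singular part of (iii) for `t > σ²`: these are Riemann sums of `t^(-1/2)` and
`t^(-3/2)`, and both give `O(1 / (σ P))`. The constant part `A` of (iii) is used only up to
`u = 2 |log H| / ρ`, where (iv) has dropped to `A`; it contributes `A u`, and beyond `u` the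
bound (iv) is a geometric series of size `O(1/ρ + Δ)`.
-/

open Finset Real

-- The `j = 0` term is `(√0)⁻¹ = 0`.
theorem sum_range_inv_sqrt_le (M : ℕ) : ∑ j ∈ range (M + 1), (√(j : ℝ))⁻¹ ≤ 2 * √(M : ℝ) := by
  have hstep (j : ℕ) : (√((j + 1 : ℕ) : ℝ))⁻¹ ≤ 2 * √((j + 1 : ℕ) : ℝ) - 2 * √(j : ℝ) := by
    have hx2 := sq_sqrt (Nat.cast_nonneg (α := ℝ) (j + 1))
    have hy2 := sq_sqrt (Nat.cast_nonneg (α := ℝ) j)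
    set x := √((j + 1 : ℕ) : ℝ)
    set y := √(j : ℝ)
    have hx : 0 < x := by positivity
    push_cast at hx2
    rw [inv_le_iff_one_le_mul₀' hx]
    nlinarith [sq_nonneg (x - y)]
  calc ∑ j ∈ range (M + 1), (√(j : ℝ))⁻¹
      = ∑ j ∈ range M, (√((j + 1 : ℕ) : ℝ))⁻¹ := by simp [sum_range_succ']
    _ ≤ ∑ j ∈ range M, (2 * √((j + 1 : ℕ) : ℝ) - 2 * √(j : ℝ)) := sum_le_sum fun j _ => hstep j
    _ = 2 * √(M : ℝ) := by rw [sum_range_sub (fun j : ℕ => 2 * √(j : ℝ))]; simp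

theorem sum_Ico_inv_mul_sqrt_le {m : ℕ} (hm : 1 ≤ m) (N : ℕ) :
    ∑ j ∈ Ico m N, ((j : ℝ) * √(j : ℝ))⁻¹ ≤ 4 / √(m : ℝ) := by
  rcases le_or_gt m N with hmN | hNm
  swap
  · rw [Ico_eq_empty_of_le hNm.le, sum_empty]; positivity
  have hstep (j : ℕ) (hj : 1 ≤ j) :
      ((j : ℝ) * √(j : ℝ))⁻¹ ≤ 4 / √(j : ℝ) - 4 / √((j + 1 : ℕ) : ℝ) := by
    have hy : 1 ≤ √(j : ℝ) := one_le_sqrt.2 (by exact_mod_cast hj)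
    have hyx : √(j : ℝ) ≤ √((j + 1 : ℕ) : ℝ) := sqrt_le_sqrt (by push_cast; linarith)
    have hx2 := sq_sqrt (Nat.cast_nonneg (α := ℝ) (j + 1))
    have hy2 := sq_sqrt (Nat.cast_nonneg (α := ℝ) j)
    set x := √((j + 1 : ℕ) : ℝ)
    set y := √(j : ℝ)
    push_cast at hx2
    have hx0 : x ≠ 0 := by positivity
    have hy0 : y ≠ 0 := by positivity
    -- `(x - y) (x + y) = 1` and `x ≤ 2 y`, so `x (x + y) ≤ 4 y ^ 2`
    have hnum : 0 ≤ 4 * y ^ 2 * (x - y) - x := by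
      have : y ^ 2 * ((x - y) * (x + y)) = y ^ 2 := by nlinarith
      nlinarith
    have hdiff : 4 / y - 4 / x - ((j : ℝ) * y)⁻¹ = (4 * y ^ 2 * (x - y) - x) / (x * y ^ 3) := by
      rw [← hy2]; field_simp
    have : 0 ≤ (4 * y ^ 2 * (x - y) - x) / (x * y ^ 3) := by positivity
    linarith
  calc ∑ j ∈ Ico m N, ((j : ℝ) * √(j : ℝ))⁻¹
      ≤ ∑ j ∈ Ico m N, (4 / √(j : ℝ) - 4 / √((j + 1 : ℕ) : ℝ)) :=
        sum_le_sum fun j hj => hstep j (hm.trans (mem_Ico.1 hj).1)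
    _ = 4 / √(m : ℝ) - 4 / √(N : ℝ) := by
        rw [← neg_sub _ (4 / √(m : ℝ)), ← sum_Ico_sub (fun j : ℕ => 4 / √(j : ℝ)) hmN,
          ← sum_neg_distrib]
        simp only [neg_sub]
    _ ≤ 4 / √(m : ℝ) := sub_le_self _ (by positivity)

theorem mul_sum_inv_sqrt_le {Δ v : ℝ} (hΔ : 0 < Δ) (hv : 0 ≤ v) (s : Finset ℕ) :
    Δ * ∑ j ∈ s with (j : ℕ) * Δ ≤ v, (√((j : ℝ) * Δ))⁻¹ ≤ 2 * √v := by
  set M := ⌊v / Δ⌋₊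
  have hsub : {j ∈ s | (j : ℕ) * Δ ≤ v} ⊆ range (M + 1) := fun j hj => by
    rw [mem_range, Nat.lt_succ_iff]
    exact Nat.le_floor ((le_div_iff₀ hΔ).2 (mem_filter.1 hj).2)
  have hMΔ : (M : ℝ) * Δ ≤ v := (le_div_iff₀ hΔ).1 (Nat.floor_le (by positivity))
  calc Δ * ∑ j ∈ s with (j : ℕ) * Δ ≤ v, (√((j : ℝ) * Δ))⁻¹
      ≤ Δ * ∑ j ∈ range (M + 1), (√((j : ℝ) * Δ))⁻¹ := by gcongr
    _ = √Δ * ∑ j ∈ range (M + 1), (√(j : ℝ))⁻¹ := by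
        rw [mul_sum, mul_sum]
        refine sum_congr rfl fun j _ => ?_
        have : √Δ ≠ 0 := by positivity
        rw [sqrt_mul (Nat.cast_nonneg j)]
        nth_rw 1 [← mul_self_sqrt hΔ.le]
        field_simp
    _ ≤ √Δ * (2 * √(M : ℝ)) := by gcongr; exact sum_range_inv_sqrt_le M
    _ = 2 * √((M : ℝ) * Δ) := by rw [sqrt_mul (Nat.cast_nonneg M)]; ring
    _ ≤ 2 * √v := by gcongr

theorem mul_sum_inv_mul_sqrt_le {Δ w : ℝ} (hΔ : 0 < Δ) (hw : 0 < w) (s : Finset ℕ) :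
    Δ * ∑ j ∈ s with w < (j : ℕ) * Δ, ((j : ℝ) * Δ * √((j : ℝ) * Δ))⁻¹ ≤ 4 / √w := by
  set m := ⌊w / Δ⌋₊ + 1
  obtain ⟨N, hN⟩ := exists_nat_subset_range s
  have hsub : {j ∈ s | w < (j : ℕ) * Δ} ⊆ Ico m N := fun j hj => by
    rw [mem_filter] at hj
    refine mem_Ico.2 ⟨Nat.floor_lt (by positivity) |>.2 ((div_lt_iff₀ hΔ).2 hj.2), ?_⟩
    exact mem_range.1 (hN hj.1)
  have hmΔ : w ≤ (m : ℝ) * Δ :=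
    (div_le_iff₀ hΔ).1 (by simpa [m] using (Nat.lt_floor_add_one (w / Δ)).le)
  calc Δ * ∑ j ∈ s with w < (j : ℕ) * Δ, ((j : ℝ) * Δ * √((j : ℝ) * Δ))⁻¹
      ≤ Δ * ∑ j ∈ Ico m N, ((j : ℝ) * Δ * √((j : ℝ) * Δ))⁻¹ := by gcongr
    _ = (√Δ)⁻¹ * ∑ j ∈ Ico m N, ((j : ℝ) * √(j : ℝ))⁻¹ := by
        rw [mul_sum, mul_sum]
        refine sum_congr rfl fun j _ => ?_
        have : √Δ ≠ 0 := by positivity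
        rw [sqrt_mul (Nat.cast_nonneg j)]
        nth_rw 1 [← mul_self_sqrt hΔ.le]
        field_simp
        rw [sq_sqrt hΔ.le]
    _ ≤ (√Δ)⁻¹ * (4 / √(m : ℝ)) := by gcongr; exact sum_Ico_inv_mul_sqrt_le (by omega) N
    _ = 4 / √((m : ℝ) * Δ) := by rw [sqrt_mul (Nat.cast_nonneg m)]; ring
    _ ≤ 4 / √w := by gcongr

theorem mul_card_filter_le {Δ u : ℝ} (hΔ : 0 < Δ) (hu : 0 ≤ u) {s : Finset ℕ} (hs : 0 ∉ s) :
    Δ * #{j ∈ s | (j : ℕ) * Δ ≤ u} ≤ u := by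
  have hsub : {j ∈ s | (j : ℕ) * Δ ≤ u} ⊆ Icc 1 ⌊u / Δ⌋₊ := fun j hj => by
    rw [mem_filter] at hj
    refine mem_Icc.2 ⟨Nat.one_le_iff_ne_zero.2 fun h => hs (h ▸ hj.1), ?_⟩
    exact Nat.le_floor ((le_div_iff₀ hΔ).2 hj.2)
  have hcard : (#{j ∈ s | (j : ℕ) * Δ ≤ u} : ℝ) ≤ u / Δ := by
    calc (#{j ∈ s | (j : ℕ) * Δ ≤ u} : ℝ) ≤ ⌊u / Δ⌋₊ := by
          exact_mod_cast (card_le_card hsub).trans (by simp)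
      _ ≤ u / Δ := Nat.floor_le (by positivity)
  calc Δ * #{j ∈ s | (j : ℕ) * Δ ≤ u} ≤ Δ * (u / Δ) := by gcongr
    _ = u := by field_simp

theorem div_one_sub_exp_neg_le {x : ℝ} (hx : 0 < x) : x / (1 - exp (-x)) ≤ 1 + x := by
  have hpos : 0 < 1 - exp (-x) := by rw [sub_pos, exp_lt_one_iff]; linarith
  rw [div_le_iff₀ hpos, exp_neg]
  have h1 : 1 + x ≤ exp x := by linarith [add_one_le_exp x]
  have h2 : (1 + x) * (exp x)⁻¹ ≤ 1 := by
    rw [mul_inv_le_iff₀ (exp_pos x)]; linarith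
  nlinarith

theorem mul_sum_exp_neg_le {Δ ρ u : ℝ} (hΔ : 0 < Δ) (hρ : 0 < ρ) (s : Finset ℕ) :
    Δ * ∑ j ∈ s with u < (j : ℕ) * Δ, exp (-ρ * j * Δ) ≤ (1 / ρ + Δ) * exp (-ρ * u) := by
  set r := exp (-(ρ * Δ))
  have hr : ∀ j : ℕ, exp (-ρ * j * Δ) = r ^ j := fun j => by
    rw [← exp_nat_mul]; ring_nf
  have hr1 : r < 1 := exp_lt_one_iff.2 (by nlinarith)
  set M := ⌈u / Δ⌉₊
  obtain ⟨N, hN⟩ := exists_nat_subset_range s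
  have hsub : {j ∈ s | u < (j : ℕ) * Δ} ⊆ Ico M N := fun j hj => by
    rw [mem_filter] at hj
    exact mem_Ico.2 ⟨Nat.ceil_le.2 ((div_le_iff₀ hΔ).2 hj.2.le), mem_range.1 (hN hj.1)⟩
  have hrM : r ^ M ≤ exp (-ρ * u) := by
    rw [← hr, exp_le_exp]
    have : u ≤ M * Δ := (div_le_iff₀ hΔ).1 (Nat.le_ceil _)
    nlinarith
  have hgeom : Δ / (1 - r) ≤ 1 / ρ + Δ := by
    have := div_one_sub_exp_neg_le (mul_pos hρ hΔ)
    calc Δ / (1 - r) = ρ * Δ / (1 - r) / ρ := by field_simp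
      _ ≤ (1 + ρ * Δ) / ρ := by gcongr
      _ = 1 / ρ + Δ := by field_simp
  calc Δ * ∑ j ∈ s with u < (j : ℕ) * Δ, exp (-ρ * j * Δ)
      ≤ Δ * ∑ j ∈ Ico M N, r ^ j := by
        simp_rw [hr]; gcongr
    _ ≤ Δ * (r ^ M / (1 - r)) := by gcongr; exact geom_sum_Ico_le_of_lt_one (by positivity) hr1
    _ = Δ / (1 - r) * r ^ M := by ring
    _ ≤ (1 / ρ + Δ) * exp (-ρ * u) := by gcongr

theorem rpow_neg_one_half_eq {x : ℝ} (hx : 0 ≤ x) : x ^ (-(1 : ℝ) / 2) = (√x)⁻¹ := by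
  rw [neg_div, rpow_neg hx, ← sqrt_eq_rpow]

theorem rpow_neg_three_halves_eq {x : ℝ} (hx : 0 ≤ x) : x ^ (-(3 : ℝ) / 2) = (x * √x)⁻¹ := by
  rw [neg_div, rpow_neg hx, show (3 : ℝ) / 2 = 1 + 1 / 2 by norm_num,
    rpow_add' hx (by norm_num), rpow_one, ← sqrt_eq_rpow]

theorem mul_sum_abs_le_of_bounds {k : ℕ → ℝ} {s : Finset ℕ} {Δ A ρ P Q E u v : ℝ}
    (hs : 0 ∉ s) (hΔ : 0 < Δ) (hρ : 0 < ρ) (hA : 0 ≤ A) (hP : 0 ≤ P) (hQ : 0 ≤ Q) (hE : 0 ≤ E)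
    (hu : 0 ≤ u) (hv : 0 < v)
    (hk₂ : ∀ j ∈ s, |k j| ≤ A / Q * ((j : ℝ) * Δ) ^ (-(1 : ℝ) / 2))
    (hk₃ : ∀ j ∈ s, |k j| ≤ A * (((j : ℝ) * Δ) ^ (-(3 : ℝ) / 2) / P + 1))
    (hk₄ : ∀ j ∈ s, |k j| ≤ E * exp (-ρ * j * Δ)) :
    Δ * ∑ j ∈ s, |k j|
      ≤ A / Q * (2 * √v) + A / P * (4 / √v) + A * u + E * ((1 / ρ + Δ) * exp (-ρ * u)) := by
  have hsplit : ∀ j ∈ s, |k j| ≤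
      A / Q * (if (j : ℝ) * Δ ≤ v then (√((j : ℝ) * Δ))⁻¹ else 0)
      + A / P * (if v < (j : ℝ) * Δ then ((j : ℝ) * Δ * √((j : ℝ) * Δ))⁻¹ else 0)
      + A * (if (j : ℝ) * Δ ≤ u then 1 else 0)
      + E * (if u < (j : ℝ) * Δ then exp (-ρ * j * Δ) else 0) := by
    intro j hj
    have ht : 0 ≤ (j : ℝ) * Δ := by positivity
    have h₂ : |k j| ≤ A / Q * (√((j : ℝ) * Δ))⁻¹ := by
      simpa only [rpow_neg_one_half_eq ht] using hk₂ j hj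
    have h₃ : |k j| ≤ A / P * ((j : ℝ) * Δ * √((j : ℝ) * Δ))⁻¹ + A := by
      refine (hk₃ j hj).trans_eq ?_
      rw [rpow_neg_three_halves_eq ht]; ring
    have h₄ := hk₄ j hj
    have : 0 ≤ A / P * ((j : ℝ) * Δ * √((j : ℝ) * Δ))⁻¹ := by positivity
    split_ifs <;> linarith [abs_nonneg (k j)]
  calc Δ * ∑ j ∈ s, |k j|
      ≤ Δ * ∑ j ∈ s, (A / Q * (if (j : ℝ) * Δ ≤ v then (√((j : ℝ) * Δ))⁻¹ else 0)
      + A / P * (if v < (j : ℝ) * Δ then ((j : ℝ) * Δ * √((j : ℝ) * Δ))⁻¹ else 0)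
      + A * (if (j : ℝ) * Δ ≤ u then 1 else 0)
      + E * (if u < (j : ℝ) * Δ then exp (-ρ * j * Δ) else 0)) := by
        gcongr with j hj; exact hsplit j hj
    _ = A / Q * (Δ * ∑ j ∈ s with (j : ℕ) * Δ ≤ v, (√((j : ℝ) * Δ))⁻¹)
        + A / P * (Δ * ∑ j ∈ s with v < (j : ℕ) * Δ, ((j : ℝ) * Δ * √((j : ℝ) * Δ))⁻¹)
        + A * (Δ * #{j ∈ s | (j : ℕ) * Δ ≤ u})
        + E * (Δ * ∑ j ∈ s with u < (j : ℕ) * Δ, exp (-ρ * j * Δ)) := by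
        simp only [sum_add_distrib, ← mul_sum, sum_filter, sum_boole]; ring
    _ ≤ _ := by
        gcongr A / Q * ?_ + A / P * ?_ + A * ?_ + E * ?_
        · exact mul_sum_inv_sqrt_le hΔ hv.le s
        · exact mul_sum_inv_mul_sqrt_le hΔ hv s
        · exact mul_card_filter_le hΔ hu hs
        · exact mul_sum_exp_neg_le hΔ hρ s

theorem prod_filter_one_le_val_eq {M : Type*} [CommMonoid M] {d : ℕ} (f : Fin d → M)
    {a b : Fin d} (ha : a.val = 1) (hb : b.val = 2) :
    ∏ l ∈ univ.filter (fun l : Fin d => 1 ≤ l.val), f l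
      = f a * f b * ∏ l ∈ univ.filter (fun l : Fin d => 3 ≤ l.val), f l := by
  have h : univ.filter (fun l : Fin d => 1 ≤ l.val)
      = insert a (insert b (univ.filter (fun l : Fin d => 3 ≤ l.val))) := by
    ext l
    simp only [mem_filter, mem_univ, true_and, mem_insert, Fin.ext_iff, ha, hb]
    omega
  rw [h, prod_insert (by simp [Fin.ext_iff, ha, hb]), prod_insert (by simp [hb]),
    mul_assoc]

theorem sum_abs_log_eq_neg_log_prod {ι : Type*} {s : Finset ι} {f : ι → ℝ}
    (h₀ : ∀ i ∈ s, 0 < f i) (h₁ : ∀ i ∈ s, f i ≤ 1) :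
    ∑ i ∈ s, |log (f i)| = -log (∏ i ∈ s, f i) := by
  rw [log_prod fun i hi => (h₀ i hi).ne', ← sum_neg_distrib]
  exact sum_congr rfl fun i hi => abs_of_nonpos (log_nonpos (h₀ i hi).le (h₁ i hi))

theorem mul_sum_range_abs_le {k : ℕ → ℝ} {n : ℕ} {Δ A ρ H P Q σ : ℝ} (hn : 1 ≤ n)
    (hΔ : 0 < Δ) (hρ : 0 < ρ) (hA : 0 ≤ A) (hH₀ : 0 < H) (hH₁ : H ≤ 1) (hP : 0 < P)
    (hσ : 0 < σ) (hQ : Q = σ ^ 2 * P)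
    (hk₁ : |k 0| ≤ A / H)
    (hk₂ : ∀ j ∈ Ico 1 n, |k j| ≤ A / Q * ((j : ℝ) * Δ) ^ (-(1 : ℝ) / 2))
    (hk₃ : ∀ j ∈ Ico 1 n, |k j| ≤ A * (((j : ℝ) * Δ) ^ (-(3 : ℝ) / 2) / P + 1))
    (hk₄ : ∀ j ∈ Ico 1 n, |k j| ≤ A / H ^ 2 * exp (-ρ * j * Δ)) :
    Δ * ∑ j ∈ range n, |k j|
      ≤ (6 * A + 2 * A / ρ) * (1 / (σ * P) + 1 + -log H + Δ / H) := by
  have hlog : 0 ≤ -log H := neg_nonneg.2 (log_nonpos hH₀.le hH₁)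
  -- the cut-off `u = 2 |log H| / ρ` makes `exp (-ρ u) = H ^ 2`
  have hexp : exp (-ρ * (2 * -log H / ρ)) = H ^ 2 := by
    rw [show -ρ * (2 * -log H / ρ) = (2 : ℕ) * log H by push_cast; field_simp, exp_nat_mul,
      exp_log hH₀]
  have hIco := mul_sum_abs_le_of_bounds (u := 2 * -log H / ρ) (by simp) hΔ hρ hA hP.le
    (hQ ▸ by positivity) (by positivity) (by positivity) (by positivity : 0 < σ ^ 2) hk₂ hk₃ hk₄
  rw [sqrt_sq hσ.le, hexp, hQ] at hIco
  have h₀ : Δ * |k 0| ≤ A * (Δ / H) := by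
    calc Δ * |k 0| ≤ Δ * (A / H) := by gcongr
      _ = A * (Δ / H) := by ring
  have hΔH : Δ ≤ Δ / H := le_div_self hΔ.le hH₀ hH₁
  have hIco' : Δ * ∑ j ∈ Ico 1 n, |k j|
      ≤ 6 * A * (1 / (σ * P)) + 2 * (A / ρ) * -log H + A / ρ + A * Δ := by
    convert hIco using 1; field_simp; ring
  rw [range_eq_Ico, sum_eq_sum_Ico_succ_bot hn, zero_add, mul_add, mul_div_assoc]
  have hX : 0 ≤ 1 / (σ * P) := by positivity
  have hAρ : 0 ≤ A / ρ := by positivity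
  have hD : 0 ≤ Δ / H := by positivity
  linarith [mul_le_mul_of_nonneg_left hΔH hA, mul_nonneg hA hlog, mul_nonneg hAρ hX,
    mul_nonneg hAρ hD, mul_nonneg hA hD]

/-- Deterministic summation core of the variance bound (`d ≥ 3`, case `k₀ = 1` with
`β₂ = β₃`): if `k(j)` satisfies the four covariance bounds (i)–(iv), then
`(Δ²/T²)·∑_{j<n} (n − j)|k(j)| ≤ (C/T)·(1/(√(h₂h₃)·∏_{l≥4} h_l) + 1 + ∑ |log h_l| + Δ/H)`
with `T = nΔ`, for constants `C, T₀` depending only on `A, ρ, d`. -/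
theorem discrete_variance_sum_bound_beta2_eq_beta3 (d : ℕ) (hd : 3 ≤ d)
    (A ρ : ℝ) (hA : 0 < A) (hρ : 0 < ρ) :
    ∃ C > (0:ℝ), ∃ T0 > (0:ℝ),
      ∀ (n : ℕ), 1 ≤ n → ∀ (Δ : ℝ), 0 < Δ →
      ∀ (h : Fin d → ℝ), (∀ l, h l ∈ Set.Ioo (0:ℝ) 1) →
      ∀ (k : ℕ → ℝ),
        (∀ j, j < n → |k j| ≤ A / ∏ l, h l) →
        (∀ j, 1 ≤ j → j < n →
          |k j| ≤ (A / ∏ l ∈ Finset.univ.filter (fun l : Fin d => 1 ≤ l.val), h l)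
                    * ((j : ℝ) * Δ) ^ (-(1:ℝ)/2)) →
        (∀ j, 1 ≤ j → j < n →
          |k j| ≤ A * (((j : ℝ) * Δ) ^ (-(3:ℝ)/2)
                          / ∏ l ∈ Finset.univ.filter (fun l : Fin d => 3 ≤ l.val), h l
                        + 1)) →
        (∀ j, j < n → |k j| ≤ (A / (∏ l, h l) ^ 2) * Real.exp (-ρ * (j : ℝ) * Δ)) →
        T0 ≤ (n : ℝ) * Δ →
        Δ ^ 2 / ((n : ℝ) * Δ) ^ 2 * ∑ j ∈ Finset.range n, ((n : ℝ) - (j : ℝ)) * |k j|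
          ≤ C / ((n : ℝ) * Δ)
              * (1 / (Real.sqrt (h ⟨1, by omega⟩ * h ⟨2, by omega⟩)
                        * ∏ l ∈ Finset.univ.filter (fun l : Fin d => 3 ≤ l.val), h l)
                  + 1 + ∑ l, |Real.log (h l)| + Δ / ∏ l, h l) := by
  refine ⟨6 * A + 2 * A / ρ, by positivity, 1, one_pos, ?_⟩
  intro n hn Δ hΔ h hh k hk₁ hk₂ hk₃ hk₄ _
  have h₀ : ∀ l ∈ univ, 0 < h l := fun l _ => (hh l).1
  have h₁ : ∀ l ∈ univ, h l ≤ 1 := fun l _ => (hh l).2.le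
  have hab : 0 < h ⟨1, by omega⟩ * h ⟨2, by omega⟩ := mul_pos (hh _).1 (hh _).1
  have hQ := prod_filter_one_le_val_eq h (a := ⟨1, by omega⟩) (b := ⟨2, by omega⟩) rfl rfl
  rw [← sq_sqrt hab.le] at hQ
  have hsum := mul_sum_range_abs_le (k := k) hn hΔ hρ hA.le (prod_pos h₀)
    (prod_le_one (fun l hl => (h₀ l hl).le) h₁) (prod_pos fun l _ => h₀ l (mem_univ l))
    (sqrt_pos.2 hab) hQ
    (hk₁ 0 hn) (fun j hj => hk₂ j (mem_Ico.1 hj).1 (mem_Ico.1 hj).2)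
    (fun j hj => hk₃ j (mem_Ico.1 hj).1 (mem_Ico.1 hj).2) (fun j hj => hk₄ j (mem_Ico.1 hj).2)
  rw [← sum_abs_log_eq_neg_log_prod h₀ h₁] at hsum
  have hweights : ∑ j ∈ range n, ((n : ℝ) - j) * |k j| ≤ n * ∑ j ∈ range n, |k j| := by
    rw [mul_sum]; gcongr; exact sub_le_self _ (Nat.cast_nonneg _)
  calc Δ ^ 2 / ((n : ℝ) * Δ) ^ 2 * ∑ j ∈ range n, ((n : ℝ) - j) * |k j|
      ≤ Δ ^ 2 / ((n : ℝ) * Δ) ^ 2 * (n * ∑ j ∈ range n, |k j|) := by gcongr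
    _ = 1 / (n * Δ) * (Δ * ∑ j ∈ range n, |k j|) := by field_simp
    _ ≤ 1 / (n * Δ) * ((6 * A + 2 * A / ρ) * _) := by gcongr
    _ = _ := by ring
end

section
/- Let d ≥ 1 and r ≥ 1 be integers, q_1, …, q_d ∈ {1, …, r}, and let s_1, …, s_{r−1} > 0, C_g > 0, λ_0 > 0. For each j ∈ {1, …, r−1} let p_j : ℝ^d × ℝ^d → [0, ∞) be a measurable function satisfying the Gaussian bound p_j(u, v) ≤ C_g · s_j^{−d/2} · e^{−λ_0 |v − u|² / s_j} for all u, v ∈ ℝ^d, where |·| is the Euclidean norm. Let K : ℝ → ℝ be integrable, h_1, …, h_d > 0 and x ∈ ℝ^d. Then ∫_{(ℝ^d)^r} ∏_{i=1}^d |K_{h_i}(x_i − u^{q_i}_i)| · ∏_{j=1}^{r−1} p_j(u^j, u^{j+1}) du^1 … du^r ≤ C_g^{r−1} · (π/λ_0)^{d(r−1)/2} · (∫_ℝ |K(u)| du)^d. -/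
/-!
By the Gaussian bound the integrand is at most
`C_g^{r-1} ∏ᵢ |K_{hᵢ}(xᵢ - u^{qᵢ}ᵢ)| ∏ⱼ γⱼ(u^{j+1} - u^j)` with `γⱼ(v) = s_j^{-d/2} e^{-λ₀|v|²/s_j}`. The increments `w⁰ = u¹`, `wʲ = u^{j+1} - u^j` are a
measure-preserving change of variables (a composition of shears), in which each anchor coordinate
`u^{qᵢ}ᵢ` is `w⁰ᵢ` plus a sum of increments; one more shear in `w⁰` absorbs that sum. The integral
then factorises into `∫ ∏ᵢ |K_{hᵢ}(xᵢ - yᵢ)| dy = (∫|K|)^d` and `∏ⱼ ∫ γⱼ = (π/λ₀)^{d(r-1)/2}`,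
neither of which depends on the bandwidths or on the time increments.
-/

open MeasureTheory Finset

open Matrix

theorem prod_vecCons_apply_vecCons {α β : Type*} [CommMonoid β] {m : ℕ} (f : α → β)
    (g : Fin m → α → β) (a : α) (w : Fin m → α) :
    ∏ k, vecCons f g k (vecCons a w k) = f a * ∏ j, g j (w j) := by
  simp [Fin.prod_univ_succ]

section Increments

variable {G : Type*} [AddCommGroup G] {m : ℕ}

def increments (t : Fin (m + 1) → G) (j : Fin m) : G :=
  t j.succ - t j.castSucc

theorem add_partialSum_increments (t : Fin (m + 1) → G) (k : Fin (m + 1)) :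
    t 0 + Fin.partialSum (increments t) k = t k := by
  have telescope := congrFun (Fin.partialSum_left_neg t) k
  simp only [Pi.vadd_apply, vadd_eq_add, neg_add_eq_sub] at telescope
  exact telescope

-- Splitting off `t 0`, the increments of `t` are those of `Fin.tail t` translated by a constant.
theorem cons_increments_succ (t : Fin (m + 2) → G) :
    vecCons (t 0) (increments t)
      = vecCons (t 0) (vecCons (Fin.tail t 0) (increments (Fin.tail t)) - Pi.single 0 (t 0)) := by
  ext k
  refine Fin.cases rfl (fun j => Fin.cases ?_ (fun i => ?_) j) k <;>
    simp [increments, Fin.tail, vecHead, vecTail]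

variable [MeasurableSpace G] [MeasurableAdd₂ G]

theorem measurable_partialSum (k : Fin (m + 1)) :
    Measurable fun b : Fin m → G => Fin.partialSum b k := by
  induction k using Fin.induction with
  | zero => simp only [Fin.partialSum_zero]; exact measurable_const
  | succ j ih =>
    simp only [Fin.partialSum_succ]
    exact ih.add (measurable_pi_apply j)

variable (μ : Measure G) [SigmaFinite μ] [μ.IsAddRightInvariant]

theorem measurePreserving_cons_add_tail {n : ℕ} {c : (Fin n → G) → G} (hc : Measurable c) :
    MeasurePreserving (fun w : Fin (n + 1) → G => vecCons (w 0 + c (Fin.tail w)) (Fin.tail w))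
      (Measure.pi fun _ => μ) (Measure.pi fun _ => μ) := by
  have e := measurePreserving_piFinSuccAbove (fun _ : Fin (n + 1) => μ) 0
  have shear : MeasurePreserving (fun p : (Fin n → G) × G => (p.1, p.2 + c p.1))
      ((Measure.pi fun _ => μ).prod μ) ((Measure.pi fun _ => μ).prod μ) :=
    (MeasurePreserving.id _).skew_product (by fun_prop)
      (.of_forall fun b => (measurePreserving_add_right μ (c b)).map_eq)
  convert (e.symm _).comp
    ((Measure.measurePreserving_swap.comp shear).comp (Measure.measurePreserving_swap.comp e))
    using 1
  funext w
  simp only [MeasurableEquiv.piFinSuccAbove_apply, MeasurableEquiv.piFinSuccAbove_symm_apply,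
    Fin.insertNthEquiv_zero, Function.comp_apply]
  rfl

variable [MeasurableNeg G]

theorem measurePreserving_cons_increments :
    MeasurePreserving (fun t : Fin (m + 1) → G => vecCons (t 0) (increments t))
      (Measure.pi fun _ => μ) (Measure.pi fun _ => μ) := by
  induction m with
  | zero =>
    have hid : (fun t : Fin 1 → G => vecCons (t 0) (increments t)) = id := by
      ext t k
      rw [Fin.fin_one_eq_zero k]
      rfl
    exact hid ▸ MeasurePreserving.id _
  | succ m ih =>
    have e := measurePreserving_piFinSuccAbove (fun _ : Fin (m + 2) => μ) 0
    have step : MeasurePreserving (fun p : G × (Fin (m + 1) → G) =>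
        (p.1, vecCons (p.2 0) (increments p.2) - Pi.single 0 p.1))
        (μ.prod (Measure.pi fun _ => μ)) (μ.prod (Measure.pi fun _ => μ)) :=
      (MeasurePreserving.id μ).skew_product
        (g := fun (a : G) (b : Fin (m + 1) → G) =>
          vecCons (b 0) (increments b) - Pi.single (M := fun _ => G) 0 a)
        ((ih.measurable.comp measurable_snd).sub ((measurable_update 0).comp measurable_fst))
        (.of_forall fun a =>
          ((measurePreserving_sub_right _ (Pi.single (M := fun _ => G) 0 a)).comp ih).map_eq)
    convert (e.symm _).comp (step.comp e) using 1
    funext t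
    rw [cons_increments_succ]
    simp only [MeasurableEquiv.piFinSuccAbove_apply, MeasurableEquiv.piFinSuccAbove_symm_apply,
      Fin.insertNthEquiv_zero, Function.comp_apply]
    rfl

theorem measurePreserving_cons_add_increments {c : (Fin m → G) → G} (hc : Measurable c) :
    MeasurePreserving (fun t : Fin (m + 1) → G => vecCons (t 0 + c (increments t)) (increments t))
      (Measure.pi fun _ => μ) (Measure.pi fun _ => μ) :=
  (measurePreserving_cons_add_tail μ hc).comp (measurePreserving_cons_increments μ)

variable {𝕜 : Type*} [RCLike 𝕜] {c : (Fin m → G) → G} {f : G → 𝕜} {g : Fin m → G → 𝕜}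

theorem integrable_chain (hc : Measurable c) (hf : Integrable f μ) (hg : ∀ j, Integrable (g j) μ) :
    Integrable (fun t => f (t 0 + c (increments t)) * ∏ j, g j (increments t j))
      (Measure.pi fun _ => μ) := by
  have hprod : Integrable (fun w => ∏ k, vecCons f g k (w k))
      (Measure.pi fun _ => μ) :=
    Integrable.fintype_prod_dep (Fin.cases hf hg)
  simpa only [Function.comp_def, prod_vecCons_apply_vecCons] using
    (measurePreserving_cons_add_increments μ hc).integrable_comp_of_integrable hprod

theorem integral_chain (hc : Measurable c) (hf : Integrable f μ) (hg : ∀ j, Integrable (g j) μ) :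
    ∫ t, f (t 0 + c (increments t)) * ∏ j, g j (increments t j) ∂(Measure.pi fun _ => μ)
      = (∫ a, f a ∂μ) * ∏ j, ∫ a, g j a ∂μ := by
  have hmp := measurePreserving_cons_add_increments μ hc
  have hprod : Integrable (fun w => ∏ k, vecCons f g k (w k))
      (Measure.pi fun _ => μ) :=
    Integrable.fintype_prod_dep (Fin.cases hf hg)
  have hmap := integral_map hmp.measurable.aemeasurable (hmp.map_eq ▸ hprod.aestronglyMeasurable)
  rw [hmp.map_eq, integral_fintype_prod_eq_prod, Fin.prod_univ_succ] at hmap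
  simpa only [prod_vecCons_apply_vecCons, cons_val_zero, cons_val_succ] using hmap.symm

end Increments

section CoordinateAnchors

variable {ι H : Type*} [AddCommGroup H] {m : ℕ} (q : ι → Fin (m + 1))

theorem add_partialSum_increments_eq_anchor (u : Fin (m + 1) → ι → H) :
    (u 0 + fun i => Fin.partialSum (increments u) (q i) i) = fun i => u (q i) i :=
  funext fun i => congrFun (add_partialSum_increments u (q i)) i

variable [MeasurableSpace H] [MeasurableAdd₂ H]

theorem measurable_partialSum_anchor :
    Measurable fun (b : Fin m → ι → H) i => Fin.partialSum b (q i) i :=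
  measurable_pi_lambda _ fun i => (measurable_pi_apply i).comp (measurable_partialSum (q i))

variable [MeasurableNeg H] (μ : Measure (ι → H)) [SigmaFinite μ]
  [μ.IsAddRightInvariant] {𝕜 : Type*} [RCLike 𝕜] {f : (ι → H) → 𝕜} {g : Fin m → (ι → H) → 𝕜}

theorem integrable_chain_pi (hf : Integrable f μ) (hg : ∀ j, Integrable (g j) μ) :
    Integrable (fun u => f (fun i => u (q i) i) * ∏ j, g j (increments u j))
      (Measure.pi fun _ => μ) := by
  simpa only [add_partialSum_increments_eq_anchor q] using
    integrable_chain μ (measurable_partialSum_anchor q) hf hg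

theorem integral_chain_pi (hf : Integrable f μ) (hg : ∀ j, Integrable (g j) μ) :
    ∫ u, f (fun i => u (q i) i) * ∏ j, g j (increments u j) ∂(Measure.pi fun _ => μ)
      = (∫ a, f a ∂μ) * ∏ j, ∫ a, g j a ∂μ := by
  simpa only [add_partialSum_increments_eq_anchor q] using
    integral_chain μ (measurable_partialSum_anchor q) hf hg

end CoordinateAnchors

theorem integrable_abs_kh_sub {K : ℝ → ℝ} (hK : Integrable K) {h : ℝ} (hh : 0 < h) (x : ℝ) :
    Integrable fun a => |kh K h (x - a)| := by
  simp only [kh, abs_mul]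
  exact ((hK.abs.comp_div hh.ne').comp_sub_left x).const_mul _

theorem integral_abs_kh_sub (K : ℝ → ℝ) {h : ℝ} (hh : 0 < h) (x : ℝ) :
    ∫ a, |kh K h (x - a)| = ∫ a, |K a| := by
  simp only [kh, abs_mul]
  rw [integral_const_mul, integral_sub_left_eq_self (fun a => |K (a / h)|) volume x,
    Measure.integral_comp_div (fun a => |K a|) h, smul_eq_mul, ← mul_assoc, ← abs_mul,
    one_div_mul_cancel hh.ne', abs_one, one_mul]

theorem integrable_prod_abs_kh_sub {ι : Type*} [Fintype ι] {K : ℝ → ℝ} (hK : Integrable K)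
    {h : ι → ℝ} (hh : ∀ i, 0 < h i) (x : ι → ℝ) :
    Integrable fun y : ι → ℝ => ∏ i, |kh K (h i) (x i - y i)| :=
  Integrable.fintype_prod fun i => integrable_abs_kh_sub hK (hh i) (x i)

theorem integral_prod_abs_kh_sub {ι : Type*} [Fintype ι] (K : ℝ → ℝ) {h : ι → ℝ}
    (hh : ∀ i, 0 < h i) (x : ι → ℝ) :
    ∫ y : ι → ℝ, ∏ i, |kh K (h i) (x i - y i)| = (∫ a, |K a|) ^ Fintype.card ι := by
  rw [integral_fintype_prod_volume_eq_prod (fun i a => |kh K (h i) (x i - a)|)]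
  simp [integral_abs_kh_sub K (hh _)]

section Gaussian

open Real

variable {lam s : ℝ}

theorem integrable_rpow_mul_exp_neg_mul_sq_div (hlam : 0 < lam) (hs : 0 < s) :
    Integrable fun a : ℝ => s ^ (-(1 : ℝ) / 2) * exp (-lam * a ^ 2 / s) := by
  simp_rw [mul_div_right_comm _ _ s, neg_div]
  exact (integrable_exp_neg_mul_sq (div_pos hlam hs)).const_mul _

theorem integral_rpow_mul_exp_neg_mul_sq_div (hlam : 0 < lam) (hs : 0 < s) :
    ∫ a : ℝ, s ^ (-(1 : ℝ) / 2) * exp (-lam * a ^ 2 / s) = (π / lam) ^ (1 / 2 : ℝ) := by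
  simp_rw [mul_div_right_comm _ _ s, neg_div]
  rw [integral_const_mul, integral_gaussian, show π / (lam / s) = s * (π / lam) by field_simp,
    sqrt_eq_rpow, mul_rpow hs.le (by positivity), ← mul_assoc, ← rpow_add hs]
  norm_num

noncomputable def gaussianKernel {ι : Type*} [Fintype ι] (lam s : ℝ) (v : ι → ℝ) : ℝ :=
  s ^ (-(Fintype.card ι : ℝ) / 2) * exp (-lam * (∑ i, v i ^ 2) / s)

variable {ι : Type*} [Fintype ι]

theorem gaussianKernel_eq_prod (hs : 0 < s) (v : ι → ℝ) :
    gaussianKernel lam s v = ∏ i, s ^ (-(1 : ℝ) / 2) * exp (-lam * v i ^ 2 / s) := by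
  rw [prod_mul_distrib, ← exp_sum, prod_const, card_univ, ← rpow_natCast, ← rpow_mul hs.le,
    ← sum_div, ← mul_sum, gaussianKernel]
  ring_nf

theorem integrable_gaussianKernel (hlam : 0 < lam) (hs : 0 < s) :
    Integrable (gaussianKernel lam s : (ι → ℝ) → ℝ) := by
  simp_rw [funext (gaussianKernel_eq_prod (lam := lam) (ι := ι) hs)]
  exact Integrable.fintype_prod fun _ => integrable_rpow_mul_exp_neg_mul_sq_div hlam hs

theorem integral_gaussianKernel (hlam : 0 < lam) (hs : 0 < s) :
    ∫ v, (gaussianKernel lam s : (ι → ℝ) → ℝ) v = (π / lam) ^ ((Fintype.card ι : ℝ) / 2) := by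
  simp_rw [gaussianKernel_eq_prod hs]
  rw [integral_fintype_prod_volume_eq_prod (fun _ a => s ^ (-(1 : ℝ) / 2) * exp (-lam * a ^ 2 / s)),
    prod_const, integral_rpow_mul_exp_neg_mul_sq_div hlam hs, card_univ, ← rpow_natCast,
    ← rpow_mul (by positivity)]
  ring_nf

end Gaussian

theorem kernel_gaussian_chain_integral_bound_general (d m : ℕ)
    (q : Fin d → Fin (m + 1))
    (s : Fin m → ℝ) (hs : ∀ j, 0 < s j)
    (Cg lam0 : ℝ) (hlam0 : 0 < lam0)
    (p : Fin m → (Fin d → ℝ) → (Fin d → ℝ) → ℝ)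
    (hp0 : ∀ j u v, 0 ≤ p j u v)
    (hpg : ∀ j u v, p j u v
      ≤ Cg * s j ^ (-(d : ℝ) / 2)
          * Real.exp (-lam0 * (∑ i, (v i - u i) ^ 2) / s j))
    (K : ℝ → ℝ) (hK : Integrable K)
    (h : Fin d → ℝ) (hh : ∀ i, 0 < h i) (x : Fin d → ℝ) :
    (∫ u : Fin (m + 1) → (Fin d → ℝ),
        (∏ i, |kh K (h i) (x i - u (q i) i)|)
          * ∏ j : Fin m, p j (u j.castSucc) (u j.succ))
      ≤ Cg ^ m * (Real.pi / lam0) ^ (((d : ℝ) * (m : ℝ)) / 2) * (∫ u, |K u|) ^ d := by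
  have hpγ j u v : p j u v ≤ Cg * gaussianKernel lam0 (s j) (v - u) := by
    simpa [gaussianKernel, mul_assoc] using hpg j u v
  have hk := integrable_prod_abs_kh_sub hK hh x
  have hγ j := integrable_gaussianKernel (ι := Fin d) hlam0 (hs j)
  have hint := integrable_chain_pi q (volume : Measure (Fin d → ℝ)) hk hγ
  have hchain := integral_chain_pi q (volume : Measure (Fin d → ℝ)) hk hγ
  rw [← volume_pi] at hchain
  beta_reduce at hchain
  calc _ ≤ ∫ u : Fin (m + 1) → Fin d → ℝ, Cg ^ m * ((∏ i, |kh K (h i) (x i - u (q i) i)|)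
          * ∏ j, gaussianKernel lam0 (s j) (increments u j)) := by
        refine integral_mono_of_nonneg (.of_forall fun u => ?_)
          (hint.const_mul _) (.of_forall fun u => ?_)
        · exact mul_nonneg (prod_nonneg fun i _ => abs_nonneg _) (prod_nonneg fun j _ => hp0 _ _ _)
        · dsimp only
          rw [mul_left_comm, ← Fin.prod_const, ← prod_mul_distrib]
          exact mul_le_mul_of_nonneg_left (prod_le_prod (fun j _ => hp0 _ _ _) fun j _ => hpγ _ _ _)
            (prod_nonneg fun i _ => abs_nonneg _)
    _ = Cg ^ m * ((∫ a, |K a|) ^ d * ∏ j : Fin m, (Real.pi / lam0) ^ ((d : ℝ) / 2)) := by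
      simp_rw [integral_const_mul, hchain, integral_prod_abs_kh_sub K hh x,
        integral_gaussianKernel hlam0 (hs _), Fintype.card_fin]
    _ = _ := by
      rw [prod_const, card_univ, Fintype.card_fin, ← Real.rpow_natCast (_ ^ _) m,
        ← Real.rpow_mul (by positivity)]
      ring_nf

/-- Chains of kernels bounded by Gaussian kernels integrate to a constant independent of
the bandwidths and of the time increments: with `r = m + 1` points `u^1, …, u^r ∈ ℝ^d`,
kernels `p_j(u, v) ≤ C_g s_j^{−d/2} e^{−λ₀|v−u|²/s_j}`, one has
`∫ ∏_i |K_{h_i}(x_i − u^{q_i}_i)| ∏_j p_j(u^j, u^{j+1}) du ≤ C_g^{r−1} (π/λ₀)^{d(r−1)/2} (∫|K|)^d`. -/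
theorem kernel_gaussian_chain_integral_bound (d m : ℕ) (hd : 1 ≤ d)
    (q : Fin d → Fin (m + 1))
    (s : Fin m → ℝ) (hs : ∀ j, 0 < s j)
    (Cg lam0 : ℝ) (hCg : 0 < Cg) (hlam0 : 0 < lam0)
    (p : Fin m → (Fin d → ℝ) → (Fin d → ℝ) → ℝ)
    (hp0 : ∀ j u v, 0 ≤ p j u v)
    (hpm : ∀ j, Measurable (fun uv : (Fin d → ℝ) × (Fin d → ℝ) => p j uv.1 uv.2))
    (hpg : ∀ j u v, p j u v
      ≤ Cg * s j ^ (-(d : ℝ) / 2)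
          * Real.exp (-lam0 * (∑ i, (v i - u i) ^ 2) / s j))
    (K : ℝ → ℝ) (hK : Integrable K)
    (h : Fin d → ℝ) (hh : ∀ i, 0 < h i) (x : Fin d → ℝ) :
    (∫ u : Fin (m + 1) → (Fin d → ℝ),
        (∏ i, |kh K (h i) (x i - u (q i) i)|)
          * ∏ j : Fin m, p j (u j.castSucc) (u j.succ))
      ≤ Cg ^ m * (Real.pi / lam0) ^ (((d : ℝ) * (m : ℝ)) / 2) * (∫ u, |K u|) ^ d :=
  kernel_gaussian_chain_integral_bound_general d m q s hs Cg lam0 hlam0 p hp0 hpg K hK h hh x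
end

section
/- Let d ≥ 2 be an integer, c_0 > 0, s > 0, t > 0, y ∈ ℝ^d and a, b ∈ ℝ. Then ∫_{ℝ^{d−1}} ∫_{ℝ^{d−1}} √s · (∏_{j=2}^d e^{−c_0 (v_j − y_j)²/s} / √s) · (e^{−c_0 (u_1 − a)²/t} / √t) · (e^{−c_0 (b − v_2)²/t} / √t) · (∏_{j=3}^d e^{−c_0 (u_j − v_j)²/t} / √t) dv_2 … dv_d du_1 du_3 … du_d ≤ (π/c_0)^{d−1}, and the bound is uniform over y ∈ ℝ^d, a, b ∈ ℝ and s, t > 0. -/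
open MeasureTheory Finset Function

/-!
The factor `√s` cancels the normalisation of the Gaussian in `v₂ - y₂`, and what it leaves is
at most `1`. The rest is a product of normalised Gaussians: one in each `vⱼ` (the one in `v₂`
centred at `b` with bandwidth `t`) and one in each `uⱼ`, centred at `a` or at `vⱼ`. The shear
`u ↦ u - m v`, where `m v` is `v` with its first coordinate replaced by `a`, decouples `u` from
`v`, and each of the `2(d - 1)` one-dimensional Gaussians integrates to `√(π / c₀)`.
-/

noncomputable def gaussKernel (c σ x : ℝ) : ℝ := Real.exp (-c * x ^ 2 / σ) / Real.sqrt σ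

section GaussKernel

variable {c σ : ℝ}

lemma gaussKernel_nonneg (x : ℝ) : 0 ≤ gaussKernel c σ x := by
  unfold gaussKernel; positivity

lemma gaussKernel_neg (x : ℝ) : gaussKernel c σ (-x) = gaussKernel c σ x := by
  simp [gaussKernel]

lemma sqrt_mul_gaussKernel_le_one (hc : 0 ≤ c) (x : ℝ) :
    Real.sqrt σ * gaussKernel c σ x ≤ 1 := by
  rcases le_or_gt σ 0 with hσ | hσ
  · simp [gaussKernel, Real.sqrt_eq_zero'.mpr hσ]
  · rw [gaussKernel, mul_div_cancel₀ _ (Real.sqrt_pos.mpr hσ).ne', Real.exp_le_one_iff,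
      neg_mul, neg_div, neg_nonpos]
    positivity

lemma gaussKernel_eq_exp_mul_sq (x : ℝ) :
    gaussKernel c σ x = Real.exp (-(c / σ) * x ^ 2) / Real.sqrt σ := by
  rw [gaussKernel]; ring_nf

lemma integrable_gaussKernel (hc : 0 < c) (hσ : 0 < σ) : Integrable (gaussKernel c σ) := by
  simp_rw [funext gaussKernel_eq_exp_mul_sq]
  exact (integrable_exp_neg_mul_sq (by positivity)).div_const _

lemma integral_gaussKernel (hc : 0 < c) (hσ : 0 < σ) :
    ∫ x, gaussKernel c σ x = Real.sqrt (Real.pi / c) := by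
  simp_rw [gaussKernel_eq_exp_mul_sq, integral_div, integral_gaussian]
  rw [← Real.sqrt_div (by positivity)]
  congr 1
  field_simp

end GaussKernel

section Shear

variable {α G : Type*} [MeasurableSpace α] [MeasurableSpace G] [AddGroup G]
  [MeasurableAdd₂ G] [MeasurableSub₂ G] {m : α → G}

def MeasurableEquiv.shearSub (hm : Measurable m) : α × G ≃ᵐ α × G where
  toEquiv := .prodShear (.refl α) fun x => Equiv.subRight (m x)
  measurable_toFun := measurable_fst.prodMk (measurable_snd.sub (hm.comp measurable_fst))
  measurable_invFun := measurable_fst.prodMk (measurable_snd.add (hm.comp measurable_fst))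

variable (μ : Measure α) [SFinite μ] (ν : Measure G) [SFinite ν] [ν.IsAddRightInvariant]

theorem measurePreserving_shearSub (hm : Measurable m) :
    MeasurePreserving (MeasurableEquiv.shearSub hm) (μ.prod ν) (μ.prod ν) :=
  (MeasurePreserving.id μ).skew_product (g := fun x y => y - m x)
    (measurable_snd.sub (hm.comp measurable_fst))
    (ae_of_all _ fun x => map_sub_right_eq_self ν (m x))

variable {𝕜 : Type*} [RCLike 𝕜]

theorem integral_prod_mul_comp_sub (hm : Measurable m) (f : α → 𝕜) (h : G → 𝕜) :
    ∫ p, f p.1 * h (p.2 - m p.1) ∂(μ.prod ν) = (∫ x, f x ∂μ) * ∫ y, h y ∂ν :=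
  ((measurePreserving_shearSub μ ν hm).integral_comp' fun q => f q.1 * h q.2).trans
    (integral_prod_mul f h)

variable {μ ν}

theorem Integrable.prod_mul_comp_sub {f : α → 𝕜} {h : G → 𝕜} (hm : Measurable m)
    (hf : Integrable f μ) (hh : Integrable h ν) :
    Integrable (fun p : α × G => f p.1 * h (p.2 - m p.1)) (μ.prod ν) :=
  (measurePreserving_shearSub μ ν hm).integrable_comp_of_integrable (hf.mul_prod hh)

end Shear

section GaussKernelPi

variable {ι : Type*} [Fintype ι] {c : ℝ} {σ : ι → ℝ}

lemma integrable_pi_prod_gaussKernel (hc : 0 < c) (hσ : ∀ i, 0 < σ i) :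
    Integrable fun z : ι → ℝ => ∏ i, gaussKernel c (σ i) (z i) :=
  Integrable.fintype_prod fun i => integrable_gaussKernel hc (hσ i)

lemma integral_pi_prod_gaussKernel (hc : 0 < c) (hσ : ∀ i, 0 < σ i) :
    ∫ z : ι → ℝ, ∏ i, gaussKernel c (σ i) (z i) =
      Real.sqrt (Real.pi / c) ^ Fintype.card ι := by
  rw [integral_fintype_prod_volume_eq_prod fun i => gaussKernel c (σ i)]
  simp only [integral_gaussKernel hc (hσ _), prod_const, card_univ]

variable [DecidableEq ι]

lemma sqrt_mul_prod_gaussKernel_le (hc : 0 ≤ c) (i₀ : ι) (s t a b : ℝ)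
    (y v u : ι → ℝ) :
    Real.sqrt s * (∏ i, gaussKernel c s (v i - y i)) * gaussKernel c t (u i₀ - a)
        * gaussKernel c t (b - v i₀) * ∏ i ∈ univ.erase i₀, gaussKernel c t (u i - v i)
      ≤ (∏ i, gaussKernel c (update (fun _ => s) i₀ t i) (v i - update y i₀ b i))
        * ∏ i, gaussKernel c t (u i - update v i₀ a i) := by
  have hv : ∏ i ∈ univ.erase i₀,
      gaussKernel c (update (fun _ => s) i₀ t i) (v i - update y i₀ b i) =
      ∏ i ∈ univ.erase i₀, gaussKernel c s (v i - y i) :=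
    prod_congr rfl fun i hi => by
      rw [update_of_ne (ne_of_mem_erase hi), update_of_ne (ne_of_mem_erase hi)]
  have hu : ∏ i ∈ univ.erase i₀, gaussKernel c t (u i - update v i₀ a i) =
      ∏ i ∈ univ.erase i₀, gaussKernel c t (u i - v i) :=
    prod_congr rfl fun i hi => by rw [update_of_ne (ne_of_mem_erase hi)]
  have hsymm : gaussKernel c t (b - v i₀) = gaussKernel c t (v i₀ - b) := by
    rw [← gaussKernel_neg, neg_sub]
  have hnonneg : 0 ≤ (∏ i, gaussKernel c (update (fun _ => s) i₀ t i)
      (v i - update y i₀ b i)) * ∏ i, gaussKernel c t (u i - update v i₀ a i) :=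
    mul_nonneg (prod_nonneg fun _ _ => gaussKernel_nonneg _)
      (prod_nonneg fun _ _ => gaussKernel_nonneg _)
  refine le_of_eq_of_le ?_ (mul_le_of_le_one_left hnonneg
    (sqrt_mul_gaussKernel_le_one (σ := s) hc (v i₀ - y i₀)))
  rw [← mul_prod_erase univ _ (mem_univ i₀), ← mul_prod_erase univ _ (mem_univ i₀),
    ← mul_prod_erase univ _ (mem_univ i₀), hv, hu, hsymm]
  simp only [update_self]
  ring

end GaussKernelPi

/-- Uniform Gaussian integral bound removing the contribution of the two smallest
bandwidths: integrating over `(v₂, …, v_d) ∈ ℝ^{d−1}` and `(u₁, u₃, …, u_d) ∈ ℝ^{d−1}`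
(with `v₁ = a`, `u₂ = b` held fixed), the chained Gaussian integrand is bounded by
`(π/c₀)^{d−1}`, uniformly over `y ∈ ℝ^d`, `a, b ∈ ℝ` and `s, t > 0`.
Here `v i` stands for `v_{i+2}` and `u 0` for `u₁`, `u i` (for `i ≥ 1`) for `u_{i+2}`,
while `y ⟨i+1⟩` stands for `y_{i+2}` (1-based indexing in the informal statement). -/
theorem gaussian_two_bandwidth_removal_bound (d : ℕ) (hd : 2 ≤ d)
    (c0 s t : ℝ) (hc0 : 0 < c0) (hs : 0 < s) (ht : 0 < t)
    (y : Fin d → ℝ) (a b : ℝ) :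
    (∫ w : (Fin (d - 1) → ℝ) × (Fin (d - 1) → ℝ),
        Real.sqrt s
          * (∏ i : Fin (d - 1),
              Real.exp (-c0 * (w.1 i - y ⟨i.val + 1, by have := i.isLt; omega⟩) ^ 2 / s)
                / Real.sqrt s)
          * (Real.exp (-c0 * (w.2 ⟨0, by omega⟩ - a) ^ 2 / t) / Real.sqrt t)
          * (Real.exp (-c0 * (b - w.1 ⟨0, by omega⟩) ^ 2 / t) / Real.sqrt t)
          * ∏ i ∈ Finset.univ.filter (fun i : Fin (d - 1) => 1 ≤ i.val),
              Real.exp (-c0 * (w.2 i - w.1 i) ^ 2 / t) / Real.sqrt t)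
      ≤ (Real.pi / c0) ^ (d - 1) := by
  let i₀ : Fin (d - 1) := ⟨0, by omega⟩
  have hfilter : univ.filter (fun i : Fin (d - 1) => 1 ≤ i.val) = univ.erase i₀ := by
    ext i
    simp only [mem_filter, mem_univ, true_and, mem_erase, ne_eq, Fin.ext_iff, and_true, i₀]
    omega
  let σ := update (fun _ : Fin (d - 1) => s) i₀ t
  have hσ : ∀ i, 0 < σ i := fun i => by
    rcases eq_or_ne i i₀ with rfl | hi
    · simpa [σ] using ht
    · simpa [σ, update_of_ne hi] using hs
  let μ := update (fun i : Fin (d - 1) => y ⟨i.val + 1, by have := i.isLt; omega⟩) i₀ b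
  have hm : Measurable fun v : Fin (d - 1) → ℝ => update v i₀ a :=
    measurable_update_left
  let F := fun z : Fin (d - 1) → ℝ => ∏ i, gaussKernel c0 (σ i) (z i)
  let H := fun z : Fin (d - 1) → ℝ => ∏ i, gaussKernel c0 t (z i)
  rw [Measure.volume_eq_prod]
  calc _ ≤ ∫ w, F (w.1 - μ) * H (w.2 - update w.1 i₀ a) ∂(volume.prod volume) := by
        refine integral_mono_of_nonneg (ae_of_all _ fun w => by positivity)
          (Integrable.prod_mul_comp_sub hm
            ((integrable_pi_prod_gaussKernel hc0 hσ).comp_sub_right μ)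
            (integrable_pi_prod_gaussKernel hc0 fun _ => ht)) (ae_of_all _ fun w => ?_)
        rw [hfilter]
        exact sqrt_mul_prod_gaussKernel_le hc0.le i₀ s t a b _ w.1 w.2
    _ = (∫ v, F v) * ∫ u, H u := by
        rw [integral_prod_mul_comp_sub volume volume hm (fun v => F (v - μ)) H,
          integral_sub_right_eq_self]
    _ = (Real.pi / c0) ^ (d - 1) := by
        rw [integral_pi_prod_gaussKernel hc0 hσ, integral_pi_prod_gaussKernel hc0 fun _ => ht,
          Fintype.card_fin, ← mul_pow, Real.mul_self_sqrt (by positivity)]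
end

section
/- Let d ≥ 3 be an integer, h_1, …, h_d ∈ (0, 1), H = ∏_{l=1}^d h_l, let 0 < Δ ≤ 1 satisfy Δ ≥ H^{2/d}, let T > 0, A > 0, ρ > 0, and let k : [0, T]² → ℝ be measurable and satisfy: (i) |k(t, s)| ≤ A/H for all s, t; (ii) |k(t, s)| ≤ A·(3^{d/2} |t − s|^{−d/2} + 1) whenever |t − s| ≥ 3Δ; (iii) |k(t, s)| ≤ (A/H²)·e^{−ρ·max(|t − s| − 2Δ, 0)} for all s, t. Then there exist constants C > 0 and T_0 > 0, depending only on A, ρ and d, such that for all T ≥ T_0: (2/T²)·∫_0^T ∫_0^t |k(t, s)| ds dt ≤ (C/T)·(Δ/H). -/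
/-
Write the inner integral in the lag `u = t - s` and split it at `u = 3Δ` and at
`u = R := 3Δ + (2/ρ) log H⁻¹`. Near the diagonal, (i) gives `3AΔ/H`. On `[3Δ, R]`, the tail of
`u^{-d/2}` in (ii) is integrable since `d ≥ 3` and contributes `O(Δ^{1-d/2}) ≤ O(Δ/H)`, because
`H ≤ Δ^{d/2}`; the constant part of (ii) contributes `A (R - 3Δ) = O(log H⁻¹) = O(Δ/H)`, because
`log H⁻¹ ≤ 3 H^{2/d - 1}`. Beyond `R`, (iii) contributes at most `(A/H²) e^{-ρ(R - 2Δ)}/ρ ≤ A/ρ`.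
So every row integral is `O(Δ/H)` uniformly in `t`, and integrating over `t ∈ [0, T]` costs a
factor `T`.
-/

open MeasureTheory Finset

open Set Real

theorem setIntegral_le_setIntegral_of_subset {α : Type*} [MeasurableSpace α] {μ : Measure α}
    {f g : α → ℝ} {s t : Set α} (hs : MeasurableSet s) (ht : MeasurableSet t) (hst : s ⊆ t)
    (hf : IntegrableOn f s μ) (hg : IntegrableOn g t μ) (hg₀ : ∀ x ∈ t, 0 ≤ g x)
    (hfg : ∀ x ∈ s, f x ≤ g x) :
    ∫ x in s, f x ∂μ ≤ ∫ x in t, g x ∂μ :=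
  (setIntegral_mono_on hf (hg.mono_set hst) hs hfg).trans
    (setIntegral_mono_set hg (ae_restrict_of_forall_mem ht hg₀) hst.eventuallyLE)

theorem intervalIntegral_le_of_three_regimes {φ g₁ g₂ g₃ : ℝ → ℝ} {t a b : ℝ}
    (ht : 0 ≤ t) (ha : 0 ≤ a) (hab : a ≤ b) (hφ : IntegrableOn φ (Ioc 0 t))
    (hg₁ : IntegrableOn g₁ (Ioc 0 a)) (hg₂ : IntegrableOn g₂ (Ioc a b))
    (hg₃ : IntegrableOn g₃ (Ioi b)) (hg₁₀ : ∀ u ∈ Ioc 0 a, 0 ≤ g₁ u)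
    (hg₂₀ : ∀ u ∈ Ioc a b, 0 ≤ g₂ u) (hg₃₀ : ∀ u ∈ Ioi b, 0 ≤ g₃ u)
    (h₁ : ∀ u ∈ Ioc 0 t, u ≤ a → φ u ≤ g₁ u)
    (h₂ : ∀ u ∈ Ioc 0 t, a < u → u ≤ b → φ u ≤ g₂ u)
    (h₃ : ∀ u ∈ Ioc 0 t, b < u → φ u ≤ g₃ u) :
    ∫ u in 0..t, φ u ≤
      (∫ u in Ioc 0 a, g₁ u) + (∫ u in Ioc a b, g₂ u) + ∫ u in Ioi b, g₃ u := by
  set a' := min a t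
  set b' := min b t
  have ha' : 0 ≤ a' := le_min ha ht
  have hab' : a' ≤ b' := min_le_min_right t hab
  have hb't : b' ≤ t := min_le_right b t
  have hφ' : ∀ x y, 0 ≤ x → x ≤ y → y ≤ t → IntervalIntegrable φ volume x y := fun x y hx hxy hyt ↦
    (intervalIntegrable_iff_integrableOn_Ioc_of_le hxy).2 (hφ.mono_set (Ioc_subset_Ioc hx hyt))
  rw [← intervalIntegral.integral_add_adjacent_intervals (hφ' 0 a' le_rfl ha' (hab'.trans hb't))
      ((hφ' a' b' ha' hab' hb't).trans (hφ' b' t (ha'.trans hab') hb't le_rfl)),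
    ← intervalIntegral.integral_add_adjacent_intervals (hφ' a' b' ha' hab' hb't)
      (hφ' b' t (ha'.trans hab') hb't le_rfl),
    intervalIntegral.integral_of_le ha', intervalIntegral.integral_of_le hab',
    intervalIntegral.integral_of_le hb't, ← add_assoc]
  have hmem : ∀ {x y}, 0 ≤ x → y ≤ t → ∀ u ∈ Ioc x y, u ∈ Ioc 0 t := fun hx hyt u hu ↦
    ⟨hx.trans_lt hu.1, hu.2.trans hyt⟩
  gcongr ?_ + ?_ + ?_
  · have hsub : Ioc 0 a' ⊆ Ioc 0 a := Ioc_subset_Ioc_right (min_le_left a t)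
    exact setIntegral_le_setIntegral_of_subset measurableSet_Ioc measurableSet_Ioc hsub
      (hφ.mono_set fun u hu ↦ hmem le_rfl (hab'.trans hb't) u hu) hg₁ hg₁₀
      fun u hu ↦ h₁ u (hmem le_rfl (hab'.trans hb't) u hu) (hsub hu).2
  · have hsub : Ioc a' b' ⊆ Ioc a b := fun u hu ↦
      ⟨(min_lt_iff.1 hu.1).resolve_right (hu.2.trans hb't).not_gt, hu.2.trans (min_le_left b t)⟩
    exact setIntegral_le_setIntegral_of_subset measurableSet_Ioc measurableSet_Ioc hsub
      (hφ.mono_set fun u hu ↦ hmem ha' hb't u hu) hg₂ hg₂₀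
      fun u hu ↦ h₂ u (hmem ha' hb't u hu) (hsub hu).1 (hsub hu).2
  · have hsub : Ioc b' t ⊆ Ioi b := fun u hu ↦
      (min_lt_iff.1 hu.1).resolve_right hu.2.not_gt
    exact setIntegral_le_setIntegral_of_subset measurableSet_Ioc measurableSet_Ioi hsub
      (hφ.mono_set fun u hu ↦ hmem (ha'.trans hab') le_rfl u hu) hg₃ hg₃₀
      fun u hu ↦ h₃ u (hmem (ha'.trans hab') le_rfl u hu) (hsub hu)

theorem setIntegral_Ioc_rpow_le {r a b : ℝ} (hr : r < -1) (ha : 0 < a) :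
    ∫ u in Ioc a b, u ^ r ≤ a ^ (r + 1) / -(r + 1) := by
  calc ∫ u in Ioc a b, u ^ r ≤ ∫ u in Ioi a, u ^ r :=
        setIntegral_mono_set (integrableOn_Ioi_rpow_of_lt hr ha)
          (ae_restrict_of_forall_mem measurableSet_Ioi fun u hu ↦ rpow_nonneg (ha.trans hu).le r)
          Ioc_subset_Ioi_self.eventuallyLE
    _ = a ^ (r + 1) / -(r + 1) := by rw [integral_Ioi_rpow_of_lt hr ha, div_neg, neg_div]

theorem integral_Ioi_exp_neg_mul_sub {ρ : ℝ} (hρ : 0 < ρ) (b c : ℝ) :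
    ∫ u in Ioi b, exp (-ρ * (u - c)) = exp (-ρ * (b - c)) / ρ := by
  have hsplit : ∀ u, exp (-ρ * (u - c)) = exp (ρ * c) * exp (-ρ * u) := fun u ↦ by
    rw [← exp_add]; congr 1; ring
  simp_rw [hsplit, integral_const_mul, integral_exp_mul_Ioi (neg_lt_zero.2 hρ)]
  field_simp

theorem integrableOn_Ioi_exp_neg_mul_sub {ρ : ℝ} (hρ : 0 < ρ) (b c : ℝ) :
    IntegrableOn (fun u ↦ exp (-ρ * (u - c))) (Ioi b) :=
  .of_integral_ne_zero <| by rw [integral_Ioi_exp_neg_mul_sub hρ]; positivity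

section IntermediateRegime

variable {d H Δ : ℝ}

theorem le_of_rpow_two_div_le (hd : 2 ≤ d) (hH₀ : 0 ≤ H) (hH₁ : H ≤ 1)
    (hHΔ : H ^ (2 / d) ≤ Δ) : H ≤ Δ :=
  (self_le_rpow_of_le_one hH₀ hH₁ ((div_le_one (by linarith)).2 hd)).trans hHΔ

theorem rpow_one_sub_half_le_div (hd : 0 < d) (hH : 0 < H) (hΔ : 0 < Δ)
    (hHΔ : H ^ (2 / d) ≤ Δ) : Δ ^ (1 - d / 2) ≤ Δ / H := by
  have hHΔd : H ≤ Δ ^ (d / 2) :=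
    (rpow_inv_le_iff_of_pos hH.le hΔ.le (by positivity)).1 (by rwa [inv_div])
  rw [rpow_sub hΔ, rpow_one]
  exact div_le_div_of_nonneg_left hΔ.le hH hHΔd

theorem log_inv_le_three_mul_div (hd : 3 ≤ d) (hH : 0 < H) (hHΔ : H ^ (2 / d) ≤ Δ) :
    log H⁻¹ ≤ 3 * (Δ / H) := by
  have hε : 1 / 3 ≤ 1 - 2 / d := by
    rw [le_sub_comm, div_le_iff₀ (by linarith)]; linarith
  have hpow : H⁻¹ ^ (1 - 2 / d) = H ^ (2 / d) / H := by
    rw [inv_rpow hH.le, ← rpow_neg hH.le, neg_sub, rpow_sub hH, rpow_one]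
  calc log H⁻¹ ≤ H⁻¹ ^ (1 - 2 / d) / (1 - 2 / d) :=
        log_le_rpow_div (inv_nonneg.2 hH.le) (by linarith)
    _ ≤ (Δ / H) / (1 / 3) := by
        rw [hpow]
        gcongr
        exact div_nonneg ((rpow_nonneg hH.le _).trans hHΔ) hH.le
    _ = 3 * (Δ / H) := by ring

theorem exp_neg_mul_add_log_inv_le_sq {ρ : ℝ} (hρ : 0 < ρ) (hH : 0 < H) (hΔ : 0 ≤ Δ) :
    exp (-ρ * (Δ + 2 / ρ * log H⁻¹)) ≤ H ^ 2 :=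
  calc exp (-ρ * (Δ + 2 / ρ * log H⁻¹)) ≤ exp (log H + log H) := by
        rw [exp_le_exp, log_inv]
        field_simp
        nlinarith [mul_nonneg hρ.le hΔ]
    _ = H ^ 2 := by rw [exp_add, exp_log hH, sq]

end IntermediateRegime

theorem setIntegral_Ioc_decay_le {d A Δ R : ℝ} (hd : 3 ≤ d) (hA : 0 ≤ A) (hΔ : 0 < Δ)
    (hR : 3 * Δ ≤ R) :
    ∫ u in Ioc (3 * Δ) R, A * (3 ^ (d / 2) * u ^ (-d / 2) + 1) ≤
      6 * A * Δ ^ (1 - d / 2) + A * (R - 3 * Δ) := by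
  have hr : -d / 2 < -1 := by linarith
  have h3Δ : 0 < 3 * Δ := by positivity
  have hint : IntegrableOn (fun u ↦ u ^ (-d / 2)) (Ioc (3 * Δ) R) :=
    (integrableOn_Ioi_rpow_of_lt hr h3Δ).mono_set Ioc_subset_Ioi_self
  have hpow : (3 : ℝ) ^ (d / 2) * (3 * Δ) ^ (-d / 2 + 1) = 3 * Δ ^ (1 - d / 2) := by
    rw [mul_rpow zero_le_three hΔ.le, ← mul_assoc, ← rpow_add zero_lt_three,
      show d / 2 + (-d / 2 + 1) = 1 by ring, rpow_one, show -d / 2 + 1 = 1 - d / 2 by ring]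
  have htail : (3 : ℝ) ^ (d / 2) * ∫ u in Ioc (3 * Δ) R, u ^ (-d / 2) ≤ 6 * Δ ^ (1 - d / 2) :=
    calc (3 : ℝ) ^ (d / 2) * ∫ u in Ioc (3 * Δ) R, u ^ (-d / 2)
        ≤ 3 ^ (d / 2) * ((3 * Δ) ^ (-d / 2 + 1) / -(-d / 2 + 1)) := by
          gcongr; exact setIntegral_Ioc_rpow_le hr h3Δ
      _ = 3 * Δ ^ (1 - d / 2) / (d / 2 - 1) := by rw [mul_div_assoc', hpow]; ring
      _ ≤ 6 * Δ ^ (1 - d / 2) := by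
          rw [div_le_iff₀ (by linarith)]
          nlinarith [rpow_pos_of_pos hΔ (1 - d / 2)]
  rw [integral_const_mul,
    integral_add (hint.const_mul _) (integrableOn_const measure_Ioc_lt_top.ne), integral_const_mul,
    setIntegral_const, volume_real_Ioc_of_le hR, smul_eq_mul, mul_one, mul_add]
  linarith [mul_le_mul_of_nonneg_left htail hA]

theorem intervalIntegral_le_of_covariance_profile {φ : ℝ → ℝ} {d A ρ M N Δ R t : ℝ}
    (hd : 3 ≤ d) (hA : 0 ≤ A) (hρ : 0 < ρ) (hM : 0 ≤ M) (hN : 0 ≤ N) (hΔ : 0 < Δ)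
    (hR : 3 * Δ ≤ R) (ht : 0 ≤ t) (hφ : IntegrableOn φ (Ioc 0 t))
    (h₁ : ∀ u ∈ Ioc 0 t, φ u ≤ M)
    (h₂ : ∀ u ∈ Ioc 0 t, 3 * Δ ≤ u → φ u ≤ A * (3 ^ (d / 2) * u ^ (-d / 2) + 1))
    (h₃ : ∀ u ∈ Ioc 0 t, φ u ≤ N * exp (-ρ * max (u - 2 * Δ) 0)) :
    ∫ u in 0..t, φ u ≤
      M * (3 * Δ) + (6 * A * Δ ^ (1 - d / 2) + A * (R - 3 * Δ)) +
        N * (exp (-ρ * (R - 2 * Δ)) / ρ) := by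
  have h3Δ : 0 < 3 * Δ := by positivity
  have hdecay : IntegrableOn (fun u ↦ A * (3 ^ (d / 2) * u ^ (-d / 2) + 1)) (Ioc (3 * Δ) R) :=
    (((integrableOn_Ioi_rpow_of_lt (by linarith) h3Δ).mono_set Ioc_subset_Ioi_self).const_mul
      _ |>.add (integrableOn_const measure_Ioc_lt_top.ne)).const_mul A
  refine (intervalIntegral_le_of_three_regimes (g₁ := fun _ ↦ M)
    (g₃ := fun u ↦ N * exp (-ρ * (u - 2 * Δ))) ht h3Δ.le hR hφ
    (integrableOn_const measure_Ioc_lt_top.ne) hdecay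
    ((integrableOn_Ioi_exp_neg_mul_sub hρ R _).const_mul N) (fun _ _ ↦ hM)
    (fun u hu ↦ by have := h3Δ.trans hu.1; positivity) (fun _ _ ↦ by positivity)
    (fun u hu _ ↦ h₁ u hu) (fun u hu hu₁ _ ↦ h₂ u hu hu₁.le) fun u hu hu₁ ↦ ?_).trans ?_
  · have := h₃ u hu
    rwa [max_eq_left (by linarith : 0 ≤ u - 2 * Δ)] at this
  · rw [setIntegral_const, volume_real_Ioc_of_le h3Δ.le, sub_zero, smul_eq_mul, mul_comm,
      integral_const_mul N, integral_Ioi_exp_neg_mul_sub hρ]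
    gcongr
    exact setIntegral_Ioc_decay_le hd hA hΔ hR

theorem intervalIntegral_abs_le_of_covariance_bounds {f : ℝ → ℝ} {d A ρ H Δ t : ℝ}
    (hd : 3 ≤ d) (hA : 0 ≤ A) (hρ : 0 < ρ) (hH₀ : 0 < H) (hH₁ : H ≤ 1) (hΔ : 0 < Δ)
    (hHΔ : H ^ (2 / d) ≤ Δ) (ht : 0 ≤ t) (hf : Measurable f)
    (h₁ : ∀ s ∈ Icc 0 t, |f s| ≤ A / H)
    (h₂ : ∀ s ∈ Icc 0 t, 3 * Δ ≤ |t - s| → |f s| ≤ A * (3 ^ (d / 2) * |t - s| ^ (-d / 2) + 1))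
    (h₃ : ∀ s ∈ Icc 0 t, |f s| ≤ A / H ^ 2 * exp (-ρ * max (|t - s| - 2 * Δ) 0)) :
    ∫ s in 0..t, |f s| ≤ (9 * A + 7 * (A / ρ)) * (Δ / H) := by
  set L := log H⁻¹
  have hL : 0 ≤ L := log_nonneg (one_le_inv_iff₀.2 ⟨hH₀, hH₁⟩)
  have hreflect : ∀ u ∈ Ioc 0 t, t - u ∈ Icc 0 t ∧ |t - (t - u)| = u := fun u hu ↦
    ⟨⟨by linarith [hu.2], by linarith [hu.1]⟩, by rw [sub_sub_cancel, abs_of_pos hu.1]⟩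
  have hφ : IntegrableOn (fun u ↦ |f (t - u)|) (Ioc 0 t) :=
    Measure.integrableOn_of_bounded measure_Ioc_lt_top.ne
      (hf.comp (measurable_const.sub measurable_id)).abs.aestronglyMeasurable
      (ae_restrict_of_forall_mem measurableSet_Ioc fun u hu ↦ by
        rw [norm_abs_eq_norm, Real.norm_eq_abs]; exact h₁ _ (hreflect u hu).1)
  have hprofile := intervalIntegral_le_of_covariance_profile (M := A / H) (N := A / H ^ 2)
    (R := 3 * Δ + 2 / ρ * L) hd hA hρ (by positivity) (by positivity) hΔ
    (by simp only [le_add_iff_nonneg_right]; positivity) ht hφ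
    (fun u hu ↦ h₁ _ (hreflect u hu).1)
    (fun u hu hu₁ ↦ by
      simpa only [(hreflect u hu).2] using h₂ _ (hreflect u hu).1 (by rwa [(hreflect u hu).2]))
    (fun u hu ↦ by simpa only [(hreflect u hu).2] using h₃ _ (hreflect u hu).1)
  rw [intervalIntegral.integral_comp_sub_left (fun s ↦ |f s|), sub_self, sub_zero] at hprofile
  have hexp : exp (-ρ * (3 * Δ + 2 / ρ * L - 2 * Δ)) ≤ H ^ 2 := by
    rw [show 3 * Δ + 2 / ρ * L - 2 * Δ = Δ + 2 / ρ * L by ring]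
    exact exp_neg_mul_add_log_inv_le_sq hρ hH₀ hΔ.le
  have hΔH : 1 ≤ Δ / H := (one_le_div hH₀).2 (le_of_rpow_two_div_le (by linarith) hH₀.le hH₁ hHΔ)
  calc ∫ s in 0..t, |f s|
      ≤ A / H * (3 * Δ) + (6 * A * Δ ^ (1 - d / 2) + A * (3 * Δ + 2 / ρ * L - 3 * Δ)) +
          A / H ^ 2 * (exp (-ρ * (3 * Δ + 2 / ρ * L - 2 * Δ)) / ρ) := hprofile
    _ ≤ A / H * (3 * Δ) + (6 * A * (Δ / H) + A * (2 / ρ * (3 * (Δ / H)))) +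
          A / H ^ 2 * (H ^ 2 / ρ) := by
        rw [add_sub_cancel_left]
        gcongr
        · exact rpow_one_sub_half_le_div (by linarith) hH₀ hΔ hHΔ
        · exact log_inv_le_three_mul_div hd hH₀ hHΔ
    _ = 9 * A * (Δ / H) + 6 * (A / ρ) * (Δ / H) + A / ρ := by field_simp; ring
    _ ≤ (9 * A + 7 * (A / ρ)) * (Δ / H) := by
        linarith [mul_le_mul_of_nonneg_left hΔH (div_nonneg hA hρ.le)]

/-- Deterministic integration core of the variance bound for the asynchronous kernel
density estimator in the intermediate regime: if `Δ ≥ H^{2/d}` and `k(t, s)` satisfies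
the covariance bounds (i)–(iii), then
`(2/T²)·∫₀ᵀ∫₀ᵗ |k(t, s)| ds dt ≤ (C/T)·(Δ/H)` for all `T ≥ T₀`, with constants
`C, T₀` depending only on `A, ρ, d`. -/
theorem asynchronous_variance_integral_bound_intermediate (d : ℕ) (hd : 3 ≤ d)
    (A ρ : ℝ) (hA : 0 < A) (hρ : 0 < ρ) :
    ∃ C > (0:ℝ), ∃ T0 > (0:ℝ),
      ∀ (h : Fin d → ℝ), (∀ l, h l ∈ Set.Ioo (0:ℝ) 1) →
      ∀ (Δ : ℝ), 0 < Δ → Δ ≤ 1 → (∏ l, h l) ^ ((2:ℝ) / (d:ℝ)) ≤ Δ →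
      ∀ (T : ℝ), T0 ≤ T →
      ∀ (k : ℝ → ℝ → ℝ), Measurable (fun ts : ℝ × ℝ => k ts.1 ts.2) →
        (∀ s ∈ Set.Icc (0:ℝ) T, ∀ t ∈ Set.Icc (0:ℝ) T, |k t s| ≤ A / ∏ l, h l) →
        (∀ s ∈ Set.Icc (0:ℝ) T, ∀ t ∈ Set.Icc (0:ℝ) T, 3 * Δ ≤ |t - s| →
          |k t s| ≤ A * ((3:ℝ) ^ ((d:ℝ)/2) * |t - s| ^ (-(d:ℝ)/2) + 1)) →
        (∀ s ∈ Set.Icc (0:ℝ) T, ∀ t ∈ Set.Icc (0:ℝ) T,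
          |k t s| ≤ (A / (∏ l, h l) ^ 2) * Real.exp (-ρ * max (|t - s| - 2 * Δ) 0)) →
        (2 / T ^ 2) * ∫ t in (0:ℝ)..T, ∫ s in (0:ℝ)..t, |k t s|
          ≤ C / T * (Δ / ∏ l, h l) := by
  refine ⟨18 * A + 14 * (A / ρ), by positivity, 1, one_pos, ?_⟩
  intro h hh Δ hΔ _ hHΔ T hT k hk hk₁ hk₂ hk₃
  set H := ∏ l, h l
  have hH₀ : 0 < H := prod_pos fun l _ ↦ (hh l).1
  have hH₁ : H ≤ 1 := prod_le_one (fun l _ ↦ (hh l).1.le) fun l _ ↦ (hh l).2.le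
  have hT₀ : 0 < T := one_pos.trans_le hT
  set B := (9 * A + 7 * (A / ρ)) * (Δ / H)
  have hrow : ∀ t ∈ Ioc 0 T, ‖∫ s in 0..t, |k t s|‖ ≤ B := fun t ht ↦ by
    have ht' : t ∈ Icc 0 T := Ioc_subset_Icc_self ht
    have hsub : ∀ s ∈ Icc 0 t, s ∈ Icc 0 T := fun s hs ↦ ⟨hs.1, hs.2.trans ht.2⟩
    rw [Real.norm_eq_abs, abs_of_nonneg (intervalIntegral.integral_nonneg ht.1.le
      fun _ _ ↦ abs_nonneg _)]
    exact intervalIntegral_abs_le_of_covariance_bounds (by exact_mod_cast hd) hA.le hρ hH₀ hH₁ hΔ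
      hHΔ ht.1.le (hk.comp (measurable_const.prodMk measurable_id))
      (fun s hs ↦ hk₁ s (hsub s hs) t ht') (fun s hs ↦ hk₂ s (hsub s hs) t ht')
      (fun s hs ↦ hk₃ s (hsub s hs) t ht')
  have houter : ∫ t in 0..T, ∫ s in 0..t, |k t s| ≤ B * T := by
    refine (le_abs_self _).trans ?_
    simpa [abs_of_pos hT₀] using intervalIntegral.norm_integral_le_of_norm_le_const
      fun t ht ↦ hrow t (uIoc_of_le hT₀.le ▸ ht)
  calc 2 / T ^ 2 * ∫ t in 0..T, ∫ s in 0..t, |k t s| ≤ 2 / T ^ 2 * (B * T) := by gcongr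
    _ = (18 * A + 14 * (A / ρ)) / T * (Δ / H) := by simp only [B]; field_simp; ring
end
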